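/- arXiv:1205.4871 — 11 statements merged into one kernel-verified Lean document; each statement's English description precedes it below -/
import Mathlib

section
/- Let t ∈ ℂ and let f_t = x_0^5 + x_1^5 + x_2^5 + x_3^5 + x_4^5 − 5t·x_0x_1x_2x_3x_4 ∈ ℂ[x_0,...,x_4]. Then there exists a nonzero point x ∈ ℂ^5 at which all five partial derivatives ∂f_t/∂x_i vanish if and only if t^5 = 1. In particular, if t^5 ≠ 1 then the quintic hypersurface X_t = {f_t = 0} ⊂ ℙ^4 is nonsingular. -/
open MvPolynomial

private lemma dwork_pderiv_eval (t : ℂ) (x : Fin 5 → ℂ) :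
    (eval x (pderiv 0 ((∑ i : Fin 5, X i ^ 5) - C (5 * t) * ∏ i : Fin 5, (X i : MvPolynomial (Fin 5) ℂ)))
      = 5 * x 0 ^ 4 - 5 * t * (x 1 * x 2 * x 3 * x 4)) ∧
    (eval x (pderiv 1 ((∑ i : Fin 5, X i ^ 5) - C (5 * t) * ∏ i : Fin 5, (X i : MvPolynomial (Fin 5) ℂ)))
      = 5 * x 1 ^ 4 - 5 * t * (x 0 * x 2 * x 3 * x 4)) ∧
    (eval x (pderiv 2 ((∑ i : Fin 5, X i ^ 5) - C (5 * t) * ∏ i : Fin 5, (X i : MvPolynomial (Fin 5) ℂ)))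
      = 5 * x 2 ^ 4 - 5 * t * (x 0 * x 1 * x 3 * x 4)) ∧
    (eval x (pderiv 3 ((∑ i : Fin 5, X i ^ 5) - C (5 * t) * ∏ i : Fin 5, (X i : MvPolynomial (Fin 5) ℂ)))
      = 5 * x 3 ^ 4 - 5 * t * (x 0 * x 1 * x 2 * x 4)) ∧
    (eval x (pderiv 4 ((∑ i : Fin 5, X i ^ 5) - C (5 * t) * ∏ i : Fin 5, (X i : MvPolynomial (Fin 5) ℂ)))
      = 5 * x 4 ^ 4 - 5 * t * (x 0 * x 1 * x 2 * x 3)) := by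
  refine ⟨?_, ?_, ?_, ?_, ?_⟩ <;>
      simp (config := { decide := true }) [Fin.sum_univ_five, Fin.prod_univ_five, pderiv_X,
        Pi.single_apply]
        <;> ring_nf <;> tauto

/-- For `f_t = x₀⁵ + x₁⁵ + x₂⁵ + x₃⁵ + x₄⁵ − 5t·x₀x₁x₂x₃x₄`, there is a
nonzero point of `ℂ⁵` at which all five partial derivatives of `f_t` vanish iff `t⁵ = 1`.
In particular, for `t⁵ ≠ 1` the quintic `X_t ⊂ ℙ⁴` is nonsingular. -/
theorem dwork_quintic_singular_iff (t : ℂ) (f : MvPolynomial (Fin 5) ℂ)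
    (hf : f = (∑ i : Fin 5, X i ^ 5) - C (5 * t) * ∏ i : Fin 5, X i) :
    (∃ x : Fin 5 → ℂ, x ≠ 0 ∧ ∀ i : Fin 5, eval x (pderiv i f) = 0) ↔ t ^ 5 = 1 := by
  subst hf
  constructor
  · rintro ⟨x, hx, h⟩
    obtain ⟨p0, p1, p2, p3, p4⟩ := dwork_pderiv_eval t x
    have h0 := h 0; have h1 := h 1; have h2 := h 2; have h3 := h 3; have h4 := h 4
    rw [p0] at h0; rw [p1] at h1; rw [p2] at h2; rw [p3] at h3; rw [p4] at h4
    set a := x 0; set b := x 1; set c := x 2; set d := x 3; set e := x 4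
    -- each coordinate's 4th power equals t times product of the others
    have e0 : a ^ 4 = t * (b * c * d * e) := by linear_combination h0 / 5
    have e1 : b ^ 4 = t * (a * c * d * e) := by linear_combination h1 / 5
    have e2 : c ^ 4 = t * (a * b * d * e) := by linear_combination h2 / 5
    have e3 : d ^ 4 = t * (a * b * c * e) := by linear_combination h3 / 5
    have e4 : e ^ 4 = t * (a * b * c * d) := by linear_combination h4 / 5
    -- the product of all coordinates is nonzero
    have hP : a * b * c * d * e ≠ 0 := by
      intro hP
      apply hx
      have q0 : a ^ 5 = 0 := by linear_combination a * e0 + t * hP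
      have q1 : b ^ 5 = 0 := by linear_combination b * e1 + t * hP
      have q2 : c ^ 5 = 0 := by linear_combination c * e2 + t * hP
      have q3 : d ^ 5 = 0 := by linear_combination d * e3 + t * hP
      have q4 : e ^ 5 = 0 := by linear_combination e * e4 + t * hP
      funext i
      fin_cases i <;>
        simpa using pow_eq_zero_iff (n := 5) (by norm_num) |>.mp (by assumption)
    -- multiply all five relations
    have key : 1 * (a * b * c * d * e) ^ 4 = t ^ 5 * (a * b * c * d * e) ^ 4 := by
      calc 1 * (a * b * c * d * e) ^ 4 = a ^ 4 * b ^ 4 * c ^ 4 * d ^ 4 * e ^ 4 := by ring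
        _ = (t * (b * c * d * e)) * (t * (a * c * d * e)) * (t * (a * b * d * e))
            * (t * (a * b * c * e)) * (t * (a * b * c * d)) := by rw [e0, e1, e2, e3, e4]
        _ = t ^ 5 * (a * b * c * d * e) ^ 4 := by ring
    have := mul_right_cancel₀ (pow_ne_zero 4 hP) key
    exact this.symm
  · intro ht
    have ht0 : t ≠ 0 := by rintro rfl; simp at ht
    refine ⟨fun i => if i = 4 then t ^ 4 else 1, ?_, ?_⟩
    · intro h
      have := congrFun h 0
      simp at this
    · obtain ⟨p0, p1, p2, p3, p4⟩ :=
        dwork_pderiv_eval t (fun i => if i = 4 then t ^ 4 else 1)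
      have q0 : eval (fun i : Fin 5 => if i = 4 then t ^ 4 else 1)
          (pderiv (0 : Fin 5) ((∑ i : Fin 5, X i ^ 5) - C (5 * t) * ∏ i : Fin 5, X i)) = 0 := by
        rw [p0]; simp; linear_combination (-5 : ℂ) * ht
      have q1 : eval (fun i : Fin 5 => if i = 4 then t ^ 4 else 1)
          (pderiv (1 : Fin 5) ((∑ i : Fin 5, X i ^ 5) - C (5 * t) * ∏ i : Fin 5, X i)) = 0 := by
        rw [p1]; simp; linear_combination (-5 : ℂ) * ht
      have q2 : eval (fun i : Fin 5 => if i = 4 then t ^ 4 else 1)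
          (pderiv (2 : Fin 5) ((∑ i : Fin 5, X i ^ 5) - C (5 * t) * ∏ i : Fin 5, X i)) = 0 := by
        rw [p2]; simp; linear_combination (-5 : ℂ) * ht
      have q3 : eval (fun i : Fin 5 => if i = 4 then t ^ 4 else 1)
          (pderiv (3 : Fin 5) ((∑ i : Fin 5, X i ^ 5) - C (5 * t) * ∏ i : Fin 5, X i)) = 0 := by
        rw [p3]; simp; linear_combination (-5 : ℂ) * ht
      have q4 : eval (fun i : Fin 5 => if i = 4 then t ^ 4 else 1)
          (pderiv (4 : Fin 5) ((∑ i : Fin 5, X i ^ 5) - C (5 * t) * ∏ i : Fin 5, X i)) = 0 := by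
        rw [p4]; simp; linear_combination (5 * t ^ 11 + 5 * t ^ 6 + 5 * t) * ht
      intro i
      have hall : ∀ j : Fin 5, j = 0 ∨ j = 1 ∨ j = 2 ∨ j = 3 ∨ j = 4 := by decide
      rcases hall i with rfl | rfl | rfl | rfl | rfl
      exacts [q0, q1, q2, q3, q4]
end

section
/- Let t ∈ ℂ with t^5 = 1 and let f_t = x_0^5 + x_1^5 + x_2^5 + x_3^5 + x_4^5 − 5t·x_0x_1x_2x_3x_4 ∈ ℂ[x_0,...,x_4]. Then the set { x ∈ ℂ^5 : x_0 = 1 and ∂f_t/∂x_i(x) = 0 for all i = 0,...,4 } has exactly 125 elements; its elements are the points (1, ξ^{a_1}, ξ^{a_2}, ξ^{a_3}, ξ^{a_4}) where ξ is a fixed primitive fifth root of unity and the residues a_1,...,a_4 modulo 5 satisfy an appropriate linear congruence, so that X_t has exactly 125 singular points, all with nonzero coordinates. -/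
/-!
Up to the factor `d`, the `i`-th partial derivative of `∑ Xᵢ^d - d t ∏ Xᵢ` is
`Xᵢ^(d-1) - t ∏_{j ≠ i} Xⱼ`. At a critical point normalised by `x₀ = 1`, the equation for `i = 0`
says `t ∏ⱼ xⱼ = 1`, and multiplying the `i`-th equation by `xᵢ` gives `xᵢ^d = t ∏ⱼ xⱼ = 1`;
conversely these two conditions give back every critical equation. So the critical points are the
tuples of `d`-th roots of unity with `x₀ = 1` and `∏ xᵢ = t⁻¹`: for `t^d = 1` the coordinates
`x₁, …, x_{n-2}` can be chosen freely and `x_{n-1}` is then forced, giving `d^(n-2) = 5³` points.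
-/

open MvPolynomial Finset

section
variable {R ι : Type*} [CommSemiring R] [DecidableEq ι]

theorem pderiv_prod_X_of_notMem {s : Finset ι} {i : ι} (hi : i ∉ s) :
    pderiv i (∏ j ∈ s, X j : MvPolynomial ι R) = 0 := by
  induction s using Finset.induction_on with
  | empty => simp
  | insert j s hj ih =>
    rw [mem_insert, not_or] at hi
    rw [prod_insert hj, pderiv_mul, pderiv_X_of_ne (Ne.symm hi.1), ih hi.2]
    simp

theorem pderiv_prod_X [Fintype ι] (i : ι) :
    pderiv i (∏ j, X j : MvPolynomial ι R) = ∏ j ∈ univ.erase i, X j := by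
  rw [← mul_prod_erase univ _ (mem_univ i), pderiv_mul, pderiv_X_self,
    pderiv_prod_X_of_notMem (notMem_erase i univ)]
  simp

end

noncomputable def dworkPolynomial {R ι : Type*} [CommRing R] [Fintype ι] (d : ℕ) (t : R) :
    MvPolynomial ι R :=
  ∑ i, X i ^ d - C (d * t) * ∏ i, X i

section
variable {ι : Type*} [Fintype ι] [DecidableEq ι]

theorem pderiv_dworkPolynomial {R : Type*} [CommRing R] (d : ℕ) (t : R) (i : ι) :
    pderiv i (dworkPolynomial d t : MvPolynomial ι R) =
      C (d : R) * (X i ^ (d - 1) - C t * ∏ j ∈ univ.erase i, X j) := by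
  have hsum :
      pderiv i (∑ j, X j ^ d : MvPolynomial ι R) = (d : MvPolynomial ι R) * X i ^ (d - 1) := by
    simp [pderiv_X, Pi.single_apply]
  rw [dworkPolynomial, map_sub, hsum, pderiv_C_mul, pderiv_prod_X, C_mul, map_natCast]
  ring

variable {K : Type*} [Field K] {d : ℕ} {t : K} {x : ι → K}

theorem eval_pderiv_dworkPolynomial_eq_zero_iff (hd : (d : K) ≠ 0) (i : ι) :
    eval x (pderiv i (dworkPolynomial d t)) = 0 ↔
      x i ^ (d - 1) = t * ∏ j ∈ univ.erase i, x j := by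
  simp [pderiv_dworkPolynomial, hd, sub_eq_zero]

theorem forall_eval_pderiv_dworkPolynomial_eq_zero_iff (hd : (d : K) ≠ 0) {i₀ : ι}
    (hx : x i₀ = 1) :
    (∀ i, eval x (pderiv i (dworkPolynomial d t)) = 0) ↔
      (∀ i, x i ^ d = 1) ∧ t * ∏ i, x i = 1 := by
  have hd0 : d ≠ 0 := by rintro rfl; simp at hd
  obtain ⟨e, rfl⟩ := Nat.exists_eq_add_one_of_ne_zero hd0
  have hprod (i : ι) : x i * ∏ j ∈ univ.erase i, x j = ∏ j, x j :=
    mul_prod_erase _ _ (mem_univ i)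
  simp only [eval_pderiv_dworkPolynomial_eq_zero_iff hd, Nat.add_sub_cancel]
  constructor
  · intro h
    have htx : t * ∏ i, x i = 1 := by
      rw [← hprod i₀, hx, one_mul, ← h i₀, hx, one_pow]
    refine ⟨fun i => ?_, htx⟩
    rw [pow_succ', h i, ← htx, ← hprod i]
    ring
  · rintro ⟨hpow, htx⟩ i
    apply mul_left_cancel₀ (IsUnit.of_pow_eq_one (hpow i) hd0).ne_zero
    rw [← pow_succ', hpow i, ← htx, ← hprod i]
    ring
end

theorem IsPrimitiveRoot.ncard_normalized_tuples_mul_prod_eq_one {K : Type*} [Field K] {n k : ℕ}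
    [NeZero n] {ζ : K} (hζ : IsPrimitiveRoot ζ n) {t : K} (ht : t ^ n = 1) :
    {x : Fin (k + 2) → K | x 0 = 1 ∧ (∀ i, x i ^ n = 1) ∧ t * ∏ i, x i = 1}.ncard = n ^ k := by
  set complete : (Fin k → K) → Fin (k + 2) → K :=
    fun y => Fin.cons 1 (Fin.snoc y (t * ∏ i, y i)⁻¹) with hcomplete
  have hinj : complete.Injective := fun y z h => by
    simpa using (Fin.snoc_injective2 (Fin.cons_injective2 h).2).1
  have himage : {x : Fin (k + 2) → K | x 0 = 1 ∧ (∀ i, x i ^ n = 1) ∧ t * ∏ i, x i = 1} =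
      complete '' ↑(Fintype.piFinset fun _ : Fin k => Polynomial.nthRootsFinset n (1 : K)) := by
    ext x
    simp only [Set.mem_ofPred_eq, Set.mem_image, Finset.mem_coe, Fintype.mem_piFinset,
      Polynomial.mem_nthRootsFinset (NeZero.pos n)]
    constructor
    · rintro ⟨hx0, hpow, hprod⟩
      rw [Fin.prod_univ_succ, Fin.prod_univ_castSucc, hx0] at hprod
      have hlast : Fin.tail x (Fin.last k) = (t * ∏ j, Fin.init (Fin.tail x) j)⁻¹ :=
        eq_inv_of_mul_eq_one_left (by rw [← hprod]; simp only [Fin.tail, Fin.init]; ring)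
      refine ⟨Fin.init (Fin.tail x), fun j => hpow _, ?_⟩
      conv_rhs => rw [← Fin.cons_self_tail x, ← Fin.snoc_init_self (Fin.tail x)]
      rw [hx0, hlast]
    · rintro ⟨y, hy, rfl⟩
      have hne : t * ∏ j, y j ≠ 0 := mul_ne_zero
        (IsUnit.of_pow_eq_one ht (NeZero.ne n)).ne_zero
        (prod_ne_zero_iff.2 fun j _ => (IsUnit.of_pow_eq_one (hy j) (NeZero.ne n)).ne_zero)
      refine ⟨rfl, fun i => ?_, ?_⟩
      · induction i using Fin.cases with
        | zero => simp [hcomplete]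
        | succ j =>
          induction j using Fin.lastCases with
          | last => simp [hcomplete, inv_pow, mul_pow, ← prod_pow, ht, hy]
          | cast j => simp [hcomplete, hy]
      · rw [hcomplete]
        simp only [Fin.prod_cons, Fin.prod_snoc]
        rw [one_mul, ← mul_assoc, mul_inv_cancel₀ hne]
  rw [himage, Set.ncard_image_of_injective _ hinj, Set.ncard_coe_finset,
    Fintype.card_piFinset_const, hζ.card_nthRootsFinset]

/-- For `t⁵ = 1` and `f_t = x₀⁵ + … + x₄⁵ − 5t·x₀x₁x₂x₃x₄`, the set of
points `x ∈ ℂ⁵` with `x₀ = 1` at which all partial derivatives of `f_t` vanish has exactly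
125 elements, and every such point has all coordinates powers of a fixed primitive fifth
root of unity `ξ`; so `X_t ⊂ ℙ⁴` has exactly 125 singular points, all with nonzero
coordinates. -/
theorem dwork_quintic_125_singular_points (t : ℂ) (ht : t ^ 5 = 1)
    (ξ : ℂ) (hξ : IsPrimitiveRoot ξ 5)
    (f : MvPolynomial (Fin 5) ℂ)
    (hf : f = (∑ i : Fin 5, X i ^ 5) - C (5 * t) * ∏ i : Fin 5, X i) :
    {x : Fin 5 → ℂ | x 0 = 1 ∧ ∀ i : Fin 5, eval x (pderiv i f) = 0}.ncard = 125 ∧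
    ∀ x ∈ {x : Fin 5 → ℂ | x 0 = 1 ∧ ∀ i : Fin 5, eval x (pderiv i f) = 0},
      ∀ i : Fin 5, ∃ a : ℕ, x i = ξ ^ a := by
  have hf' : f = dworkPolynomial 5 t := by
    rw [hf, dworkPolynomial]
    norm_num
  have hcritical : {x : Fin 5 → ℂ | x 0 = 1 ∧ ∀ i : Fin 5, eval x (pderiv i f) = 0} =
      {x | x 0 = 1 ∧ (∀ i, x i ^ 5 = 1) ∧ t * ∏ i, x i = 1} := by
    ext x
    refine and_congr_right fun hx => ?_
    rw [hf', forall_eval_pderiv_dworkPolynomial_eq_zero_iff (by norm_num) hx]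
  rw [hcritical]
  refine ⟨hξ.ncard_normalized_tuples_mul_prod_eq_one (k := 3) ht, ?_⟩
  rintro x ⟨-, hpow, -⟩ i
  obtain ⟨a, -, ha⟩ := hξ.eq_pow_of_pow_eq_one (hpow i)
  exact ⟨a, ha.symm⟩
end

section
/- Let t ∈ ℂ with t ≠ 0 and let f_t = x_0^5 + x_1^5 + x_2^5 + x_3^5 + x_4^5 − 5t·x_0x_1x_2x_3x_4 ∈ ℂ[x_0,...,x_4]. For λ = (λ_0,...,λ_4) ∈ (ℂ*)^5, there exists c ∈ ℂ such that f_t(λ_0x_0, λ_1x_1, λ_2x_2, λ_3x_3, λ_4x_4) = c·f_t(x_0,...,x_4) as polynomials if and only if λ_0^5 = λ_1^5 = λ_2^5 = λ_3^5 = λ_4^5 = λ_0λ_1λ_2λ_3λ_4. -/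
open MvPolynomial

/-- For `t ≠ 0` and `f_t = x₀⁵ + … + x₄⁵ − 5t·x₀x₁x₂x₃x₄`, a torus element
`λ ∈ (ℂ*)⁵` (acting by rescaling the variables) sends `f_t` to a scalar multiple of itself
iff `λ₀⁵ = λ₁⁵ = λ₂⁵ = λ₃⁵ = λ₄⁵ = λ₀λ₁λ₂λ₃λ₄`. -/
theorem dwork_quintic_torus_action (t : ℂ) (ht : t ≠ 0)
    (f : MvPolynomial (Fin 5) ℂ)
    (hf : f = (∑ i : Fin 5, X i ^ 5) - C (5 * t) * ∏ i : Fin 5, X i)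
    (l : Fin 5 → ℂ) (hl : ∀ i, l i ≠ 0) :
    (∃ c : ℂ, aeval (fun i : Fin 5 => C (l i) * X i) f = C c * f) ↔
      ∀ i : Fin 5, l i ^ 5 = ∏ j : Fin 5, l j := by
  subst hf
  constructor
  · rintro ⟨c, h⟩
    have hev : ∀ p : Fin 5 → ℂ,
        (∑ i : Fin 5, (l i * p i) ^ 5) - 5 * t * ∏ i : Fin 5, (l i * p i)
          = c * ((∑ i : Fin 5, p i ^ 5) - 5 * t * ∏ i : Fin 5, p i) := by
      intro p
      have h2 := congrArg (eval p) h
      simp only [map_sub, map_sum, map_mul, map_pow, map_prod, aeval_X, aeval_C,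
        eval_C, eval_X, eval_mul, algebraMap_eq] at h2
      convert h2 using 2 <;> ring
    have hc : ∀ i : Fin 5, l i ^ 5 = c := by
      intro i
      have hji : (i + 1 : Fin 5) ≠ i := by
        simp [Fin.ext_iff]
      have h1 := hev (fun k => if k = i then 1 else 0)
      have hs : ∀ m : Fin 5 → ℂ, (∑ k : Fin 5, (m k * (if k = i then (1:ℂ) else 0)) ^ 5)
          = m i ^ 5 := by
        intro m
        rw [Finset.sum_eq_single i] <;> simp (config := {contextual := true}) [Ne.symm]
      have hp : ∀ m : Fin 5 → ℂ, (∏ k : Fin 5, (m k * (if k = i then (1:ℂ) else 0))) = 0 := by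
        intro m
        exact Finset.prod_eq_zero (Finset.mem_univ (i+1)) (by simp [hji])
      have h1' : (∑ k : Fin 5, ((if k = i then (1:ℂ) else 0)) ^ 5) = 1 := by
        have := hs (fun _ => 1)
        simpa using this
      rw [hs l, hp l] at h1
      have hp' : (∏ k : Fin 5, (if k = i then (1:ℂ) else 0)) = 0 := by
        have := hp (fun _ => 1)
        simpa using this
      rw [h1', hp'] at h1
      simpa using h1
    have hones := hev (fun _ => 1)
    simp only [mul_one, one_pow] at hones
    have hsum : (∑ i : Fin 5, l i ^ 5) = 5 * c := by
      rw [Finset.sum_congr rfl (fun i _ => hc i)]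
      simp
    have h5 : (∑ i : Fin 5, (1:ℂ)) = 5 := by simp
    rw [hsum] at hones
    have hprod : (∏ j : Fin 5, l j) = c := by
      have h5t : (5:ℂ) * t ≠ 0 := by simp [ht]
      have key : (5:ℂ) * t * (∏ j : Fin 5, l j) = 5 * t * c := by
        linear_combination -hones
      exact mul_left_cancel₀ h5t key
    intro i
    rw [hprod]
    exact hc i
  · intro h
    refine ⟨∏ j : Fin 5, l j, ?_⟩
    simp only [map_sub, map_sum, map_mul, map_pow, map_prod, aeval_X, aeval_C, mul_pow,
      algebraMap_eq]
    rw [Finset.prod_mul_distrib, ← map_prod]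
    have : ∀ i : Fin 5, C (l i) ^ 5 * X i ^ 5 = C (∏ j : Fin 5, l j) * X i ^ 5 := by
      intro i
      rw [← C_pow, h i]
    rw [Finset.sum_congr rfl (fun i _ => this i), ← Finset.mul_sum]
    ring
end

section
/- Let ξ ∈ ℂ be a primitive fifth root of unity and let the group (ℤ/5ℤ)^3 act on the quotient ring R = ℂ[x_2,x_3,x_4]/(x_2^5 + x_3^5 + x_4^5) by ℂ-algebra automorphisms via (a_2,a_3,a_4)·x_i = ξ^{a_i} x_i for i = 2,3,4. Then the subalgebra of invariants R^{(ℤ/5ℤ)^3} is isomorphic as a ℂ-algebra to a polynomial ring in two variables over ℂ; indeed it equals ℂ[y_0,y_1,y_2]/(y_0+y_1+y_2) where y_i is the class of x_{i+2}^5. -/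
open MvPolynomial

/-- The subalgebra of elements fixed by a family of `ℂ`-algebra automorphisms. -/
noncomputable def invariantSubalgebra {R : Type} [CommRing R] [Algebra ℂ R]
    {G : Type} (σ : G → (R ≃ₐ[ℂ] R)) : Subalgebra ℂ R where
  carrier := {r | ∀ g, σ g r = r}
  mul_mem' := by intro a b ha hb g; rw [map_mul, ha g, hb g]
  add_mem' := by intro a b ha hb g; rw [map_add, ha g, hb g]
  algebraMap_mem' := by intro c g; exact (σ g).commutes c

/-- The Fermat quintic curve coordinate ring `ℂ[x₂,x₃,x₄]/(x₂⁵ + x₃⁵ + x₄⁵)`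
(variables indexed by `Fin 3`). -/
noncomputable abbrev FermatQuinticRing : Type :=
  MvPolynomial (Fin 3) ℂ ⧸
    Ideal.span {(X 0 : MvPolynomial (Fin 3) ℂ) ^ 5 + X 1 ^ 5 + X 2 ^ 5}

/-- The Fermat quintic ideal. -/
noncomputable abbrev fqIdeal : Ideal (MvPolynomial (Fin 3) ℂ) :=
  Ideal.span {(X 0 : MvPolynomial (Fin 3) ℂ) ^ 5 + X 1 ^ 5 + X 2 ^ 5}

lemma charSum (ξ : ℂ) (hξ : IsPrimitiveRoot ξ 5) (d : ℕ) :
    (∑ t : ZMod 5, ξ ^ ((t.val) * d)) = if 5 ∣ d then 5 else 0 := by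
  have h1 : (∑ t : ZMod 5, ξ ^ ((t.val) * d)) = ∑ k ∈ Finset.range 5, (ξ ^ d) ^ k := by
    rw [← Fin.sum_univ_eq_sum_range (fun k => (ξ ^ d) ^ k) 5]
    apply Finset.sum_congr rfl
    intro t _
    rw [← pow_mul, mul_comm]; rfl
  rw [h1]
  by_cases h : 5 ∣ d
  · have : ξ ^ d = 1 := (hξ.pow_eq_one_iff_dvd d).mpr h
    simp [this, h]
  · have hne : ξ ^ d ≠ 1 := fun hc => h ((hξ.pow_eq_one_iff_dvd d).mp hc)
    rw [geom_sum_eq hne]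
    have : (ξ ^ d) ^ 5 = 1 := by
      rw [← pow_mul, mul_comm, pow_mul, hξ.pow_eq_one, one_pow]
    simp [this, h]

lemma monomial_mem_adjoin (d : Fin 3 →₀ ℕ) (c : ℂ) (hd : ∀ i, 5 ∣ d i) :
    (monomial d c : MvPolynomial (Fin 3) ℂ) ∈
      Algebra.adjoin ℂ {q : MvPolynomial (Fin 3) ℂ | ∃ i, q = X i ^ 5} := by
  rw [monomial_eq]
  apply Subalgebra.mul_mem
  · rw [← algebraMap_eq]
    exact Subalgebra.algebraMap_mem _ c
  · rw [Finsupp.prod_fintype _ _ (fun i => pow_zero _)]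
    apply Subalgebra.prod_mem
    intro i _
    obtain ⟨k, hk⟩ := hd i
    rw [hk, pow_mul]
    exact Subalgebra.pow_mem _ (Algebra.subset_adjoin (Set.mem_setOf.mpr ⟨i, rfl⟩)) k

lemma sum_scaled_mem (ξ : ℂ) (hξ : IsPrimitiveRoot ξ 5) (p : MvPolynomial (Fin 3) ℂ) :
    (∑ a : Fin 3 → ZMod 5, aeval (fun i => C (ξ ^ ((a i).val)) * X i) p) ∈
      Algebra.adjoin ℂ {q : MvPolynomial (Fin 3) ℂ | ∃ i, q = X i ^ 5} := by
  have key : ∀ (a : Fin 3 → ZMod 5) (d : Fin 3 →₀ ℕ) (c : ℂ),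
      aeval (fun i => C (ξ ^ ((a i).val)) * X i) (monomial d c)
        = monomial d (c * ∏ i, ξ ^ ((a i).val * d i)) := by
    intro a d c
    rw [aeval_monomial, Finsupp.prod_fintype _ _ (fun i => pow_zero _)]
    rw [monomial_eq, Finsupp.prod_fintype _ _ (fun i => pow_zero _)]
    simp only [mul_pow, ← C_pow, ← pow_mul]
    rw [Finset.prod_mul_distrib,
      ← map_prod (C : ℂ →+* MvPolynomial (Fin 3) ℂ) (fun i => ξ ^ ((a i).val * d i)) Finset.univ,
      ← mul_assoc, algebraMap_eq, ← C_mul]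
  rw [p.as_sum]
  simp only [map_sum, key]
  rw [Finset.sum_comm]
  apply Subalgebra.sum_mem
  intro d _
  rw [← map_sum (monomial d), ← Finset.mul_sum]
  have hchar : (∑ a : Fin 3 → ZMod 5, ∏ i, ξ ^ ((a i).val * d i))
      = ∏ i, ∑ t : ZMod 5, ξ ^ (t.val * d i) := by
    rw [Finset.prod_univ_sum, Fintype.piFinset_univ]
  rw [hchar]
  by_cases hall : ∀ i, 5 ∣ d i
  · exact monomial_mem_adjoin d _ hall
  · obtain ⟨i, hi⟩ := not_forall.mp hall
    have hz : ∑ t : ZMod 5, ξ ^ (t.val * d i) = 0 := by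
      rw [charSum ξ hξ]; simp [hi]
    rw [Finset.prod_eq_zero (Finset.mem_univ i) hz, mul_zero, map_zero]
    exact Subalgebra.zero_mem _

lemma key_inj (p : MvPolynomial (Fin 2) ℂ)
    (h : (aeval ![(X 1 : MvPolynomial (Fin 3) ℂ) ^ 5, X 2 ^ 5] p) ∈ fqIdeal) : p = 0 := by
  rw [Ideal.mem_span_singleton] at h
  obtain ⟨g, hg⟩ := h
  apply MvPolynomial.funext (q := 0)
  intro x
  rw [map_zero]
  obtain ⟨z1, hz1⟩ := IsAlgClosed.exists_pow_nat_eq (k := ℂ) (x 0) (n := 5) (by norm_num)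
  obtain ⟨z2, hz2⟩ := IsAlgClosed.exists_pow_nat_eq (k := ℂ) (x 1) (n := 5) (by norm_num)
  obtain ⟨z0, hz0⟩ := IsAlgClosed.exists_pow_nat_eq (k := ℂ) (-(x 0 + x 1)) (n := 5) (by norm_num)
  have h2 := congrArg (eval ![z0, z1, z2]) hg
  rw [map_mul] at h2
  have hf : eval ![z0, z1, z2] ((X 0 : MvPolynomial (Fin 3) ℂ) ^ 5 + X 1 ^ 5 + X 2 ^ 5) = 0 := by
    simp only [map_add, map_pow, eval_X]
    simp [hz0, hz1, hz2]
  rw [hf, zero_mul] at h2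
  have h3 : eval ![z0, z1, z2] (aeval ![(X 1 : MvPolynomial (Fin 3) ℂ) ^ 5, X 2 ^ 5] p)
      = eval x p := by
    have hcoe : ∀ {n : ℕ} (y : Fin n → ℂ) (q : MvPolynomial (Fin n) ℂ), aeval y q = eval y q := by
      intro n y q; rw [aeval_def, Algebra.algebraMap_self]; rfl
    rw [← hcoe, ← hcoe, ← AlgHom.comp_apply, comp_aeval]
    have hfun : (fun i => (aeval (R := ℂ) ![z0, z1, z2])
        (![(X 1 : MvPolynomial (Fin 3) ℂ) ^ 5, X 2 ^ 5] i)) = x := by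
      funext j; fin_cases j <;> simp [hz1, hz2]
    rw [hfun]
  rw [h3] at h2
  exact h2


lemma fq_sig (ξ : ℂ)
    (σ : (Fin 3 → ZMod 5) → (FermatQuinticRing ≃ₐ[ℂ] FermatQuinticRing))
    (hσ : ∀ (a : Fin 3 → ZMod 5) (i : Fin 3),
      σ a (Ideal.Quotient.mk _ (X i)) =
        Ideal.Quotient.mk _ (C (ξ ^ (a i).val) * X i)) :
    ∀ (a : Fin 3 → ZMod 5) (p : MvPolynomial (Fin 3) ℂ),
      σ a (Ideal.Quotient.mk fqIdeal p)
        = Ideal.Quotient.mk fqIdeal (aeval (fun i => C (ξ ^ ((a i).val)) * X i) p) := by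
  intro a p
  have h := MvPolynomial.algHom_ext
    (f := ((σ a : FermatQuinticRing →ₐ[ℂ] FermatQuinticRing)).comp (Ideal.Quotient.mkₐ ℂ fqIdeal))
    (g := (Ideal.Quotient.mkₐ ℂ fqIdeal).comp (aeval (fun i => C (ξ ^ ((a i).val)) * X i)))
    (fun i => by
      simp only [AlgHom.comp_apply, Ideal.Quotient.mkₐ_eq_mk, aeval_X, AlgHom.coe_coe]
      exact hσ a i)
  have := AlgHom.congr_fun h p
  simpa [Ideal.Quotient.mkₐ_eq_mk] using this

lemma fq_mk_mem (q : MvPolynomial (Fin 3) ℂ)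
    (hq : q ∈ Algebra.adjoin ℂ {q : MvPolynomial (Fin 3) ℂ | ∃ i, q = X i ^ 5}) :
    Ideal.Quotient.mk fqIdeal q ∈ Algebra.adjoin ℂ
      {r : FermatQuinticRing | ∃ i : Fin 3,
        r = Ideal.Quotient.mk fqIdeal ((X i : MvPolynomial (Fin 3) ℂ) ^ 5)} := by
  have h1 : Ideal.Quotient.mkₐ ℂ fqIdeal q ∈
      (Algebra.adjoin ℂ {q : MvPolynomial (Fin 3) ℂ | ∃ i, q = X i ^ 5}).map
        (Ideal.Quotient.mkₐ ℂ fqIdeal) :=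
    Subalgebra.mem_map.mpr ⟨q, hq, rfl⟩
  rw [AlgHom.map_adjoin] at h1
  refine Algebra.adjoin_mono ?_ h1
  rintro x ⟨w, ⟨i, rfl⟩, rfl⟩
  exact ⟨i, by simp [Ideal.Quotient.mkₐ_eq_mk]⟩

lemma fq_fwd (ξ : ℂ) (hξ : IsPrimitiveRoot ξ 5)
    (σ : (Fin 3 → ZMod 5) → (FermatQuinticRing ≃ₐ[ℂ] FermatQuinticRing))
    (hσ : ∀ (a : Fin 3 → ZMod 5) (i : Fin 3),
      σ a (Ideal.Quotient.mk _ (X i)) =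
        Ideal.Quotient.mk _ (C (ξ ^ (a i).val) * X i)) :
    invariantSubalgebra σ ≤ Algebra.adjoin ℂ
      {r : FermatQuinticRing | ∃ i : Fin 3,
        r = Ideal.Quotient.mk fqIdeal ((X i : MvPolynomial (Fin 3) ℂ) ^ 5)} := by
  intro r hr
  obtain ⟨p, rfl⟩ := Ideal.Quotient.mk_surjective r
  have hr' : ∀ a, σ a (Ideal.Quotient.mk fqIdeal p) = Ideal.Quotient.mk fqIdeal p := hr
  have hsum : Ideal.Quotient.mk fqIdeal
      (∑ a : Fin 3 → ZMod 5, aeval (fun i => C (ξ ^ ((a i).val)) * X i) p)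
      = (125 : ℂ) • Ideal.Quotient.mk fqIdeal p := by
    rw [map_sum]
    have heach : ∀ a : Fin 3 → ZMod 5,
        Ideal.Quotient.mk fqIdeal (aeval (fun i => C (ξ ^ ((a i).val)) * X i) p)
          = Ideal.Quotient.mk fqIdeal p := fun a => by rw [← fq_sig ξ σ hσ a p]; exact hr' a
    rw [Finset.sum_congr rfl (fun a _ => heach a), Finset.sum_const, Finset.card_univ]
    have hcard : Fintype.card (Fin 3 → ZMod 5) = 125 := by
      simp [Fintype.card_fun]
    rw [hcard, ← Nat.cast_smul_eq_nsmul ℂ]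
    norm_num
  have hmem := fq_mk_mem _ (sum_scaled_mem ξ hξ p)
  rw [hsum] at hmem
  have hscal : Ideal.Quotient.mk fqIdeal p
      = (125 : ℂ)⁻¹ • ((125 : ℂ) • Ideal.Quotient.mk fqIdeal p) := by
    rw [smul_smul]; norm_num
  rw [hscal]
  exact Subalgebra.smul_mem _ hmem _

lemma fq_bwd (ξ : ℂ) (hξ : IsPrimitiveRoot ξ 5)
    (σ : (Fin 3 → ZMod 5) → (FermatQuinticRing ≃ₐ[ℂ] FermatQuinticRing))
    (hσ : ∀ (a : Fin 3 → ZMod 5) (i : Fin 3),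
      σ a (Ideal.Quotient.mk _ (X i)) =
        Ideal.Quotient.mk _ (C (ξ ^ (a i).val) * X i)) :
    Algebra.adjoin ℂ
      {r : FermatQuinticRing | ∃ i : Fin 3,
        r = Ideal.Quotient.mk fqIdeal ((X i : MvPolynomial (Fin 3) ℂ) ^ 5)}
      ≤ invariantSubalgebra σ := by
  apply Algebra.adjoin_le
  rintro r ⟨i, rfl⟩
  show ∀ a : Fin 3 → ZMod 5, σ a (Ideal.Quotient.mk fqIdeal ((X i : MvPolynomial (Fin 3) ℂ) ^ 5))
    = Ideal.Quotient.mk fqIdeal ((X i : MvPolynomial (Fin 3) ℂ) ^ 5)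
  intro a
  have h5 : (ξ ^ ((a i).val)) ^ 5 = 1 := by
    rw [← pow_mul, mul_comm, pow_mul, hξ.pow_eq_one, one_pow]
  rw [fq_sig ξ σ hσ a]
  congr 1
  rw [map_pow, aeval_X, mul_pow, ← C_pow, h5, map_one, one_mul]

lemma fq_rel0 : Ideal.Quotient.mk fqIdeal ((X 0 : MvPolynomial (Fin 3) ℂ) ^ 5)
    = - Ideal.Quotient.mk fqIdeal ((X 1 : MvPolynomial (Fin 3) ℂ) ^ 5)
      - Ideal.Quotient.mk fqIdeal ((X 2 : MvPolynomial (Fin 3) ℂ) ^ 5) := by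
  have h0 : Ideal.Quotient.mk fqIdeal
      ((X 0 : MvPolynomial (Fin 3) ℂ) ^ 5 + X 1 ^ 5 + X 2 ^ 5) = 0 :=
    Ideal.Quotient.eq_zero_iff_mem.mpr (Ideal.subset_span rfl)
  rw [map_add, map_add] at h0
  linear_combination h0

noncomputable def fqV : Fin 2 → FermatQuinticRing :=
  ![Ideal.Quotient.mk fqIdeal ((X 1 : MvPolynomial (Fin 3) ℂ) ^ 5),
    Ideal.Quotient.mk fqIdeal ((X 2 : MvPolynomial (Fin 3) ℂ) ^ 5)]

lemma fq_Vind : AlgebraicIndependent ℂ fqV := by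
  rw [algebraicIndependent_iff]
  intro w hw
  apply key_inj
  apply Ideal.Quotient.eq_zero_iff_mem.mp
  have hcomp : aeval fqV w = Ideal.Quotient.mkₐ ℂ fqIdeal
      (aeval ![(X 1 : MvPolynomial (Fin 3) ℂ) ^ 5, X 2 ^ 5] w) := by
    rw [← AlgHom.comp_apply, comp_aeval]
    have hfun : (fun i => (Ideal.Quotient.mkₐ ℂ fqIdeal)
        (![(X 1 : MvPolynomial (Fin 3) ℂ) ^ 5, X 2 ^ 5] i)) = fqV := by
      funext j; fin_cases j <;> simp [fqV, Ideal.Quotient.mkₐ_eq_mk]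
    rw [hfun]
  rw [← Ideal.Quotient.mkₐ_eq_mk ℂ, ← hcomp]
  exact hw

lemma fq_adjV : Algebra.adjoin ℂ (Set.range fqV) = Algebra.adjoin ℂ
    {r : FermatQuinticRing | ∃ i : Fin 3,
      r = Ideal.Quotient.mk fqIdeal ((X i : MvPolynomial (Fin 3) ℂ) ^ 5)} := by
  apply le_antisymm
  · apply Algebra.adjoin_mono
    rintro r ⟨j, rfl⟩
    fin_cases j
    · exact ⟨1, by simp [fqV]⟩
    · exact ⟨2, by simp [fqV]⟩
  · apply Algebra.adjoin_le
    rintro r ⟨i, rfl⟩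
    fin_cases i
    · rw [show ((X (⟨0, by norm_num⟩ : Fin 3) : MvPolynomial (Fin 3) ℂ)) = X 0 from rfl, fq_rel0]
      exact Subalgebra.sub_mem _
        (Subalgebra.neg_mem _ (Algebra.subset_adjoin ⟨0, by simp [fqV]⟩))
        (Algebra.subset_adjoin ⟨1, by simp [fqV]⟩)
    · exact Algebra.subset_adjoin ⟨0, by simp [fqV]⟩
    · exact Algebra.subset_adjoin ⟨1, by simp [fqV]⟩

/-- Let `(ℤ/5ℤ)³` act on `R = ℂ[x₂,x₃,x₄]/(x₂⁵+x₃⁵+x₄⁵)` by rescaling the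
`i`-th variable by `ξ^{aᵢ}` for a fixed primitive fifth root of unity `ξ`. Then the invariant
subalgebra equals the subalgebra generated by the classes of the fifth powers of the
variables, and it is isomorphic as a `ℂ`-algebra to a polynomial ring in two variables. -/
theorem invariants_of_fermat_quintic_ring (ξ : ℂ) (hξ : IsPrimitiveRoot ξ 5)
    (σ : (Fin 3 → ZMod 5) → (FermatQuinticRing ≃ₐ[ℂ] FermatQuinticRing))
    (hσ : ∀ (a : Fin 3 → ZMod 5) (i : Fin 3),
      σ a (Ideal.Quotient.mk _ (X i)) =
        Ideal.Quotient.mk _ (C (ξ ^ (a i).val) * X i)) :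
    invariantSubalgebra σ =
      Algebra.adjoin ℂ
        {r : FermatQuinticRing | ∃ i : Fin 3,
          r = Ideal.Quotient.mk _ ((X i : MvPolynomial (Fin 3) ℂ) ^ 5)} ∧
    Nonempty ((invariantSubalgebra σ) ≃ₐ[ℂ] MvPolynomial (Fin 2) ℂ) := by
  have part1 : invariantSubalgebra σ = Algebra.adjoin ℂ
      {r : FermatQuinticRing | ∃ i : Fin 3,
        r = Ideal.Quotient.mk fqIdeal ((X i : MvPolynomial (Fin 3) ℂ) ^ 5)} :=
    le_antisymm (fq_fwd ξ hξ σ hσ) (fq_bwd ξ hξ σ hσ)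
  have hadjV : Algebra.adjoin ℂ (Set.range fqV) = invariantSubalgebra σ :=
    fq_adjV.trans part1.symm
  exact ⟨part1, ⟨(Subalgebra.equivOfEq _ _ hadjV.symm).trans fq_Vind.aevalEquiv.symm⟩⟩
end

section
/- Let F be the following set of 12 four-element subsets of {1,...,7}: {1,2,4,5}, {1,2,4,6}, {1,2,5,6}, {1,3,4,5}, {1,3,4,6}, {1,3,5,6}, {2,3,4,5}, {2,3,5,6}, {2,3,4,7}, {2,3,6,7}, {2,4,6,7}, {3,4,6,7} (the facets of the triangulation P^7_2 of the 3-sphere). Then the group of permutations σ of {1,...,7} such that σ maps every member of F to a member of F is isomorphic to the dihedral group of order 8. -/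
set_option maxRecDepth 100000
set_option maxHeartbeats 10000000
set_option synthInstance.maxHeartbeats 1000000
set_option synthInstance.maxSize 2000

private def ρ' : Equiv.Perm (Fin 7) :=
  Equiv.swap 0 4 * Equiv.swap 1 3 * Equiv.swap 3 2 * Equiv.swap 2 5

private def σ' : Equiv.Perm (Fin 7) := Equiv.swap 1 2

private def f0 : DihedralGroup 4 → Equiv.Perm (Fin 7)
  | .r i => ρ' ^ i.val
  | .sr i => σ' * ρ' ^ i.val

private def Fset : Finset (Finset (Fin 7)) :=
  {({0, 1, 3, 4} : Finset (Fin 7)), {0, 1, 3, 5}, {0, 1, 4, 5},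
      {0, 2, 3, 4}, {0, 2, 3, 5}, {0, 2, 4, 5}, {1, 2, 3, 4}, {1, 2, 4, 5},
      {1, 2, 3, 6}, {1, 2, 5, 6}, {1, 3, 5, 6}, {2, 3, 5, 6}}

private theorem f0_mul : ∀ a b : DihedralGroup 4, f0 (a * b) = f0 a * f0 b := by decide

private theorem f0_inj : Function.Injective f0 := by decide

private def φ' : DihedralGroup 4 →* Equiv.Perm (Fin 7) where
  toFun := f0
  map_one' := by decide
  map_mul' := f0_mul

private theorem f0_maps : ∀ d : DihedralGroup 4, ∀ s ∈ Fset, Finset.image (f0 d) s ∈ Fset := by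
  decide

private theorem key : ∀ a0 a1 a3 a4 : Fin 7, ({a0,a1,a3,a4} : Finset (Fin 7)) ∈ Fset →
    ∀ a5, ({a0,a1,a3,a5} : Finset (Fin 7)) ∈ Fset → ({a0,a1,a4,a5} : Finset (Fin 7)) ∈ Fset →
    ∀ a2, ({a0,a2,a3,a4} : Finset (Fin 7)) ∈ Fset → ({a0,a2,a3,a5} : Finset (Fin 7)) ∈ Fset →
      ({a0,a2,a4,a5} : Finset (Fin 7)) ∈ Fset → ({a1,a2,a3,a4} : Finset (Fin 7)) ∈ Fset →
      ({a1,a2,a4,a5} : Finset (Fin 7)) ∈ Fset →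
    ∀ a6, ({a1,a2,a3,a6} : Finset (Fin 7)) ∈ Fset → ({a1,a2,a5,a6} : Finset (Fin 7)) ∈ Fset →
      ({a1,a3,a5,a6} : Finset (Fin 7)) ∈ Fset → ({a2,a3,a5,a6} : Finset (Fin 7)) ∈ Fset →
    ([a0,a1,a2,a3,a4,a5,a6] : List (Fin 7)) ∈ ([[0,1,2,3,4,5,6],[0,1,2,5,4,3,6],
      [0,2,1,3,4,5,6],[0,2,1,5,4,3,6],[4,3,5,1,0,2,6],[4,3,5,2,0,1,6],
      [4,5,3,1,0,2,6],[4,5,3,2,0,1,6]] : List (List (Fin 7))) := by decide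

private theorem of_list_eq (σ τ : Equiv.Perm (Fin 7))
    (h : [σ 0, σ 1, σ 2, σ 3, σ 4, σ 5, σ 6] = [τ 0, τ 1, τ 2, τ 3, τ 4, τ 5, τ 6]) :
    τ = σ := by
  simp only [List.cons.injEq, and_true] at h
  obtain ⟨h0, h1, h2, h3, h4, h5, h6⟩ := h
  ext x
  fin_cases x <;> simp_all

/-- The facets of the triangulation `P⁷₂` of the 3-sphere on the seven
vertices `{1,…,7}` (here encoded as `Fin 7`, vertex `i` corresponding to `i−1`) are
`1245, 1246, 1256, 1345, 1346, 1356, 2345, 2356, 2347, 2367, 2467, 3467`. The group of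
permutations of the vertices mapping every facet to a facet is isomorphic to the dihedral
group of order 8. -/
theorem automorphism_group_P72 (F : Finset (Finset (Fin 7)))
    (hF : F = {({0, 1, 3, 4} : Finset (Fin 7)), {0, 1, 3, 5}, {0, 1, 4, 5},
      {0, 2, 3, 4}, {0, 2, 3, 5}, {0, 2, 4, 5}, {1, 2, 3, 4}, {1, 2, 4, 5},
      {1, 2, 3, 6}, {1, 2, 5, 6}, {1, 3, 5, 6}, {2, 3, 5, 6}})
    (H : Subgroup (Equiv.Perm (Fin 7)))
    (hH : ∀ σ : Equiv.Perm (Fin 7), σ ∈ H ↔ ∀ s ∈ F, s.image σ ∈ F) :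
    Nonempty (H ≃* DihedralGroup 4) := by
  have hFs : F = Fset := hF
  subst hFs
  have hrange : φ'.range = H := by
    ext σ
    rw [hH]
    constructor
    · rintro ⟨d, rfl⟩
      exact f0_maps d
    · intro hc
      have img : ∀ a b c d : Fin 7,
          Finset.image σ ({a, b, c, d} : Finset (Fin 7)) = {σ a, σ b, σ c, σ d} := by
        intro a b c d
        simp [Finset.image_insert]
      have c1 := img 0 1 3 4 ▸ hc {0,1,3,4} (by decide)
      have c2 := img 0 1 3 5 ▸ hc {0,1,3,5} (by decide)
      have c3 := img 0 1 4 5 ▸ hc {0,1,4,5} (by decide)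
      have c4 := img 0 2 3 4 ▸ hc {0,2,3,4} (by decide)
      have c5 := img 0 2 3 5 ▸ hc {0,2,3,5} (by decide)
      have c6 := img 0 2 4 5 ▸ hc {0,2,4,5} (by decide)
      have c7 := img 1 2 3 4 ▸ hc {1,2,3,4} (by decide)
      have c8 := img 1 2 4 5 ▸ hc {1,2,4,5} (by decide)
      have c9 := img 1 2 3 6 ▸ hc {1,2,3,6} (by decide)
      have c10 := img 1 2 5 6 ▸ hc {1,2,5,6} (by decide)
      have c11 := img 1 3 5 6 ▸ hc {1,3,5,6} (by decide)
      have c12 := img 2 3 5 6 ▸ hc {2,3,5,6} (by decide)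
      have hk := key (σ 0) (σ 1) (σ 3) (σ 4) c1 (σ 5) c2 c3 (σ 2) c4 c5 c6 c7 c8
        (σ 6) c9 c10 c11 c12
      simp only [List.mem_cons, List.not_mem_nil, or_false] at hk
      rcases hk with h | h | h | h | h | h | h | h
      · exact ⟨.r 0, of_list_eq σ (f0 (.r 0)) (h.trans (by decide))⟩
      · exact ⟨.sr 2, of_list_eq σ (f0 (.sr 2)) (h.trans (by decide))⟩
      · exact ⟨.sr 0, of_list_eq σ (f0 (.sr 0)) (h.trans (by decide))⟩
      · exact ⟨.r 2, of_list_eq σ (f0 (.r 2)) (h.trans (by decide))⟩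
      · exact ⟨.sr 1, of_list_eq σ (f0 (.sr 1)) (h.trans (by decide))⟩
      · exact ⟨.r 1, of_list_eq σ (f0 (.r 1)) (h.trans (by decide))⟩
      · exact ⟨.r 3, of_list_eq σ (f0 (.r 3)) (h.trans (by decide))⟩
      · exact ⟨.sr 3, of_list_eq σ (f0 (.sr 3)) (h.trans (by decide))⟩
  exact ⟨((MulEquiv.subgroupCongr hrange).symm.trans
    (MonoidHom.ofInjective (f0_inj : Function.Injective ⇑φ')).symm)⟩
end

section
/- Let F be the following set of 13 four-element subsets of {1,...,7}: {2,4,6,7}, {2,3,6,7}, {1,3,6,7}, {1,4,6,7}, {2,4,5,6}, {2,3,5,6}, {1,3,5,6}, {1,4,5,6}, {1,2,4,7}, {1,2,3,7}, {1,3,4,5}, {2,3,4,5}, {1,2,3,4} (the facets of the triangulation P^7_4 of the 3-sphere). Then the group of permutations σ of {1,...,7} such that σ maps every member of F to a member of F is isomorphic to the dihedral group of order 8. -/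
/-!
Counting facets through a pair of vertices is invariant under automorphisms. For `P⁷₄`
(vertices numbered from `0`) the pairs lying in exactly five facets are the edges of the square `0 – 2 – 1 – 3`, on which the
dihedral group of order 8 acts simply transitively by automorphisms of the complex. An
automorphism fixing the two adjacent square vertices `0` and `2` fixes every vertex `v`, since
`v` is determined by how many facets contain `{0, v}` and `{2, v}`. Hence every automorphism
agrees with exactly one of these eight symmetries.
-/

open Finset

section FaceDegree

variable {α : Type*} [DecidableEq α]

def faceDegree (F : Finset (Finset α)) (t : Finset α) : ℕ := #{s ∈ F | t ⊆ s}

theorem faceDegree_le_faceDegree_image {F : Finset (Finset α)} {σ : Equiv.Perm α}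
    (hσ : ∀ s ∈ F, s.image σ ∈ F) (t : Finset α) :
    faceDegree F t ≤ faceDegree F (t.image σ) := by
  refine card_le_card_of_injOn (·.image σ) (fun s hs => ?_) ?_
  · simp only [coe_filter, Set.mem_ofPred_eq] at hs ⊢
    exact ⟨hσ s hs.1, image_subset_image hs.2⟩
  · exact fun s _ s' _ h => image_injective σ.injective h

theorem faceDegree_image_of_mem {F : Finset (Finset α)} {H : Subgroup (Equiv.Perm α)}
    (hH : ∀ σ : Equiv.Perm α, σ ∈ H ↔ ∀ s ∈ F, s.image σ ∈ F) {σ : Equiv.Perm α}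
    (hσ : σ ∈ H) (t : Finset α) : faceDegree F (t.image σ) = faceDegree F t := by
  refine le_antisymm ?_ (faceDegree_le_faceDegree_image ((hH σ).1 hσ) t)
  calc faceDegree F (t.image σ)
      ≤ faceDegree F ((t.image σ).image ⇑σ⁻¹) :=
        faceDegree_le_faceDegree_image ((hH σ⁻¹).1 (H.inv_mem hσ)) _
    _ = faceDegree F t := by simp [image_image, Function.comp_def]

theorem eq_of_apply_eq_of_faceDegree_injective {F : Finset (Finset α)}
    {H : Subgroup (Equiv.Perm α)} (hH : ∀ σ : Equiv.Perm α, σ ∈ H ↔ ∀ s ∈ F, s.image σ ∈ F)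
    {a b : α} (hinj : Function.Injective fun v => (faceDegree F {a, v}, faceDegree F {b, v}))
    {σ π : Equiv.Perm α} (hσ : σ ∈ H) (hπ : π ∈ H) (ha : σ a = π a) (hb : σ b = π b) :
    σ = π := by
  set τ := π⁻¹ * σ
  have hτ : τ ∈ H := H.mul_mem (H.inv_mem hπ) hσ
  have hfix {x : α} (hx : σ x = π x) : τ x = x := by
    simp [τ, Equiv.Perm.mul_apply, hx]
  ext v
  suffices τ v = v by rwa [Equiv.Perm.mul_apply, Equiv.Perm.inv_eq_iff_eq] at this
  apply hinj
  have hpair {x : α} (hx : σ x = π x) :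
      faceDegree F {x, τ v} = faceDegree F {x, v} := by
    rw [← faceDegree_image_of_mem hH hτ {x, v}, image_insert, image_singleton, hfix hx]
  simp only [hpair ha, hpair hb]

end FaceDegree

def facetsP74 : Finset (Finset (Fin 7)) :=
  {({1, 3, 5, 6} : Finset (Fin 7)), {1, 2, 5, 6}, {0, 2, 5, 6},
      {0, 3, 5, 6}, {1, 3, 4, 5}, {1, 2, 4, 5}, {0, 2, 4, 5}, {0, 3, 4, 5},
      {0, 1, 3, 6}, {0, 1, 2, 6}, {0, 2, 3, 4}, {1, 2, 3, 4}, {0, 1, 2, 3}}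

def rotationP74 : Equiv.Perm (Fin 7) :=
  ⟨![2, 3, 1, 0, 6, 5, 4], ![3, 2, 0, 1, 6, 5, 4], by decide, by decide⟩

set_option maxRecDepth 4000 in
/-- The rotation turns the square `0 – 2 – 1 – 3` and swaps the vertices `4` and `6`, whose links
contain its diagonals `{2, 3}` and `{0, 1}`; the reflection swaps `0` and `1`. -/
def dihedralToPermP74 : DihedralGroup 4 →* Equiv.Perm (Fin 7) :=
  MonoidHom.mk'
    (fun
      | .r i => rotationP74 ^ i.val
      | .sr i => Equiv.swap 0 1 * rotationP74 ^ i.val)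
    (by decide)

theorem dihedralToPermP74_injective : Function.Injective dihedralToPermP74 := by
  decide

set_option maxRecDepth 4000 in
theorem dihedralToPermP74_mem :
    ∀ x : DihedralGroup 4, ∀ s ∈ facetsP74, s.image (dihedralToPermP74 x) ∈ facetsP74 := by
  decide

theorem exists_dihedralToPermP74_of_faceDegree_eq_five :
    ∀ a b : Fin 7, faceDegree facetsP74 {a, b} = 5 →
      ∃ x : DihedralGroup 4, dihedralToPermP74 x 0 = a ∧ dihedralToPermP74 x 2 = b := by
  decide

theorem faceDegree_facetsP74_injective :
    Function.Injective fun v : Fin 7 =>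
      (faceDegree facetsP74 {0, v}, faceDegree facetsP74 {2, v}) := by
  decide

/-- The facets of the triangulation `P⁷₄` of the 3-sphere on the seven
vertices `{1,…,7}` (here encoded as `Fin 7`, vertex `i` corresponding to `i−1`) are
`2467, 2367, 1367, 1467, 2456, 2356, 1356, 1456, 1247, 1237, 1345, 2345, 1234`. The group
of permutations of the vertices mapping every facet to a facet is isomorphic to the
dihedral group of order 8. -/
theorem automorphism_group_P74 (F : Finset (Finset (Fin 7)))
    (hF : F = {({1, 3, 5, 6} : Finset (Fin 7)), {1, 2, 5, 6}, {0, 2, 5, 6},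
      {0, 3, 5, 6}, {1, 3, 4, 5}, {1, 2, 4, 5}, {0, 2, 4, 5}, {0, 3, 4, 5},
      {0, 1, 3, 6}, {0, 1, 2, 6}, {0, 2, 3, 4}, {1, 2, 3, 4}, {0, 1, 2, 3}})
    (H : Subgroup (Equiv.Perm (Fin 7)))
    (hH : ∀ σ : Equiv.Perm (Fin 7), σ ∈ H ↔ ∀ s ∈ F, s.image σ ∈ F) :
    Nonempty (H ≃* DihedralGroup 4) := by
  obtain rfl : F = facetsP74 := hF
  have hrange : dihedralToPermP74.range = H := by
    ext σ
    constructor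
    · rintro ⟨x, rfl⟩
      exact (hH _).2 (dihedralToPermP74_mem x)
    · intro hσ
      have hedge : faceDegree facetsP74 {σ 0, σ 2} = 5 := by
        rw [← image_singleton σ, ← image_insert, faceDegree_image_of_mem hH hσ]
        decide
      obtain ⟨x, h0, h2⟩ := exists_dihedralToPermP74_of_faceDegree_eq_five _ _ hedge
      exact ⟨x, eq_of_apply_eq_of_faceDegree_injective hH faceDegree_facetsP74_injective
        ((hH _).2 (dihedralToPermP74_mem x)) hσ h0 h2⟩
  exact ⟨(MulEquiv.subgroupCongr hrange.symm).trans
    (MonoidHom.ofInjective dihedralToPermP74_injective).symm⟩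
end

section
/- Let F be the following set of 14 four-element subsets of {1,...,7}: {1,2,3,4}, {1,2,3,7}, {1,2,6,7}, {1,2,5,6}, {1,2,4,5}, {1,3,4,7}, {1,4,5,7}, {1,5,6,7}, {2,3,4,5}, {2,3,5,6}, {2,3,6,7}, {3,4,6,7}, {3,4,5,6}, {4,5,6,7} (the facets of the triangulation P^7_5 of the 3-sphere). Then the group of permutations σ of {1,...,7} such that σ maps every member of F to a member of F is isomorphic to the dihedral group of order 14. -/
/-! The edges of `P⁷₅` lying in exactly five facets are precisely the edges `{x, x + 1}` of the
cycle `0, 1, …, 6` on `ZMod 7`. Every automorphism preserves the number of facets through an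
edge, so it maps cycle neighbours to cycle neighbours; an injective self-map of `ZMod n`
(`n ≥ 3`) doing that is `x ↦ c + x` or `x ↦ c - x`, i.e. comes from the standard action of the
dihedral group. Conversely these fourteen maps preserve the facets. -/

open Function Finset Equiv

section UnitSteps

variable {R : Type*} [AddCommGroupWithOne R] {f : R → R}

theorem step_succ_eq_step (h2 : (2 : R) ≠ 0) (hf : Injective f)
    (hstep : ∀ x, f (x + 1) = f x + 1 ∨ f (x + 1) = f x - 1) (x : R) :
    f (x + 1 + 1) - f (x + 1) = f (x + 1) - f x := by
  by_contra hne
  -- two opposite unit steps cancel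
  have hback : f (x + 1 + 1) = f x := by
    rcases hstep (x + 1) with h | h <;> rcases hstep x with h' | h' <;> rw [h, h'] at hne ⊢
    · exact (hne (by abel)).elim
    · abel
    · abel
    · exact (hne (by abel)).elim
  have h0 : x + 1 + 1 = x + 0 := by rw [add_zero]; exact hf hback
  rw [add_assoc, add_left_cancel_iff, one_add_one_eq_two] at h0
  exact h2 h0

theorem apply_natCast_eq_add_nsmul (h2 : (2 : R) ≠ 0) (hf : Injective f)
    (hstep : ∀ x, f (x + 1) = f x + 1 ∨ f (x + 1) = f x - 1) (n : ℕ) :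
    f n = f 0 + n • (f 1 - f 0) := by
  have hconst : ∀ n : ℕ, f (n + 1) - f n = f 1 - f 0 := by
    intro n
    induction n with
    | zero => simp
    | succ n ih => push_cast; rw [step_succ_eq_step h2 hf hstep, ih]
  induction n with
  | zero => simp
  | succ n ih =>
    push_cast
    rw [← sub_add_cancel (f (n + 1)) (f n), hconst, ih, succ_nsmul]
    abel

theorem eq_add_or_eq_sub_of_unit_steps (hcast : Surjective (Nat.cast : ℕ → R))
    (h2 : (2 : R) ≠ 0) (hf : Injective f)
    (hstep : ∀ x, f (x + 1) = f x + 1 ∨ f (x + 1) = f x - 1) :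
    (∀ x, f x = f 0 + x) ∨ (∀ x, f x = f 0 - x) := by
  have hnat := apply_natCast_eq_add_nsmul h2 hf hstep
  rcases zero_add (1 : R) ▸ hstep 0 with h | h
  · left
    intro x
    obtain ⟨n, rfl⟩ := hcast x
    rw [hnat, h, add_sub_cancel_left, nsmul_one]
  · right
    intro x
    obtain ⟨n, rfl⟩ := hcast x
    rw [hnat, h, sub_sub_cancel_left, smul_neg, nsmul_one, sub_eq_add_neg]

end UnitSteps

namespace DihedralGroup

variable {n : ℕ}

-- Under the convention `r i * sr j = sr (j - i)`, the reflections `x ↦ i - x` pair with the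
-- rotations `x ↦ x - i`.
variable (n) in
def toPerm : DihedralGroup n →* Perm (ZMod n) where
  toFun
    | r i => Equiv.subRight i
    | sr i => Equiv.subLeft i
  map_one' := Equiv.ext sub_zero
  map_mul' a b := by
    rcases a with i | i <;> rcases b with j | j <;> ext x <;>
      simp only [r_mul_r, r_mul_sr, sr_mul_r, sr_mul_sr, Perm.mul_apply, subRight_apply,
        subLeft_apply] <;> abel

@[simp]
theorem toPerm_r_apply (i x : ZMod n) : toPerm n (r i) x = x - i := rfl

@[simp]
theorem toPerm_sr_apply (i x : ZMod n) : toPerm n (sr i) x = i - x := rfl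

theorem toPerm_injective (h2 : (2 : ZMod n) ≠ 0) : Injective (toPerm n) := by
  refine (injective_iff_map_eq_one _).2 fun g hg => ?_
  have hfix (x : ZMod n) : toPerm n g x = x := DFunLike.congr_fun hg x
  rcases g with i | i
  · have h0 := hfix 0
    rw [toPerm_r_apply, zero_sub, neg_eq_zero] at h0
    rw [h0, one_def]
  · have h0 := hfix 0
    have h1 := hfix 1
    rw [toPerm_sr_apply, sub_zero] at h0
    rw [toPerm_sr_apply, h0, zero_sub, neg_eq_iff_eq_neg] at h1
    exact (h2 (by linear_combination h1)).elim

theorem mem_range_toPerm [NeZero n] (h2 : (2 : ZMod n) ≠ 0) {σ : Perm (ZMod n)}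
    (hσ : ∀ x, σ (x + 1) = σ x + 1 ∨ σ (x + 1) = σ x - 1) : σ ∈ (toPerm n).range := by
  rcases eq_add_or_eq_sub_of_unit_steps ZMod.natCast_zmod_surjective h2 σ.injective hσ
    with h | h
  · exact ⟨r (-σ 0), Equiv.ext fun x => by
    rw [toPerm_r_apply, sub_neg_eq_add, add_comm]; exact (h x).symm⟩
  · exact ⟨sr (σ 0), Equiv.ext fun x => (h x).symm⟩

end DihedralGroup

section EdgeDegree

variable {α : Type*} [DecidableEq α] {F : Finset (Finset α)} {σ : Perm α}

def edgeDegree (F : Finset (Finset α)) (a b : α) : ℕ :=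
  #{s ∈ F | a ∈ s ∧ b ∈ s}

theorem edgeDegree_le_edgeDegree_apply (hσ : ∀ s ∈ F, s.image σ ∈ F) (a b : α) :
    edgeDegree F a b ≤ edgeDegree F (σ a) (σ b) := by
  refine card_le_card_of_injOn (image σ) (fun s hs => ?_) (image_injective σ.injective).injOn
  simp only [coe_filter, Set.mem_ofPred_eq] at hs ⊢
  exact ⟨hσ s hs.1, mem_image_of_mem σ hs.2.1, mem_image_of_mem σ hs.2.2⟩

theorem edgeDegree_apply_apply (hσ : ∀ s ∈ F, s.image σ ∈ F)
    (hσ' : ∀ s ∈ F, s.image ⇑σ⁻¹ ∈ F) (a b : α) :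
    edgeDegree F (σ a) (σ b) = edgeDegree F a b := by
  refine le_antisymm ?_ (edgeDegree_le_edgeDegree_apply hσ a b)
  simpa using edgeDegree_le_edgeDegree_apply hσ' (σ a) (σ b)

end EdgeDegree

def P75 : Finset (Finset (ZMod 7)) :=
  {{0, 1, 2, 3}, {0, 1, 2, 6}, {0, 1, 5, 6}, {0, 1, 4, 5}, {0, 1, 3, 4}, {0, 2, 3, 6},
    {0, 3, 4, 6}, {0, 4, 5, 6}, {1, 2, 3, 4}, {1, 2, 4, 5}, {1, 2, 5, 6}, {2, 3, 5, 6},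
    {2, 3, 4, 5}, {3, 4, 5, 6}}

theorem edgeDegree_P75_eq_five_iff :
    ∀ a b : ZMod 7, edgeDegree P75 a b = 5 ↔ b = a + 1 ∨ b = a - 1 := by
  decide

set_option maxRecDepth 10000 in
theorem image_toPerm_mem_P75 :
    ∀ g : DihedralGroup 7, ∀ s ∈ P75, s.image (DihedralGroup.toPerm 7 g) ∈ P75 := by
  decide

theorem apply_add_one_of_image_mem_P75 {σ : Perm (ZMod 7)} (hσ : ∀ s ∈ P75, s.image σ ∈ P75)
    (hσ' : ∀ s ∈ P75, s.image ⇑σ⁻¹ ∈ P75) (x : ZMod 7) :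
    σ (x + 1) = σ x + 1 ∨ σ (x + 1) = σ x - 1 :=
  (edgeDegree_P75_eq_five_iff _ _).1 <| (edgeDegree_apply_apply hσ hσ' x (x + 1)).trans <|
    (edgeDegree_P75_eq_five_iff _ _).2 (Or.inl rfl)

/-- The facets of the triangulation `P⁷₅` of the 3-sphere on the seven
vertices `{1,…,7}` (here encoded as `Fin 7`, vertex `i` corresponding to `i−1`) are
`1234, 1237, 1267, 1256, 1245, 1347, 1457, 1567, 2345, 2356, 2367, 3467, 3456, 4567`. The
group of permutations of the vertices mapping every facet to a facet is isomorphic to the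
dihedral group of order 14. -/
theorem automorphism_group_P75 (F : Finset (Finset (Fin 7)))
    (hF : F = {({0, 1, 2, 3} : Finset (Fin 7)), {0, 1, 2, 6}, {0, 1, 5, 6},
      {0, 1, 4, 5}, {0, 1, 3, 4}, {0, 2, 3, 6}, {0, 3, 4, 6}, {0, 4, 5, 6},
      {1, 2, 3, 4}, {1, 2, 4, 5}, {1, 2, 5, 6}, {2, 3, 5, 6}, {2, 3, 4, 5},
      {3, 4, 5, 6}})
    (H : Subgroup (Equiv.Perm (Fin 7)))
    (hH : ∀ σ : Equiv.Perm (Fin 7), σ ∈ H ↔ ∀ s ∈ F, s.image σ ∈ F) :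
    Nonempty (H ≃* DihedralGroup 7) := by
  -- `ZMod 7` unfolds to `Fin 7`, so `F` is `P75` by definition
  have hP75 : F = P75 := hF
  subst hP75
  have h2 : (2 : ZMod 7) ≠ 0 := by decide
  let φ : DihedralGroup 7 →* Equiv.Perm (Fin 7) := DihedralGroup.toPerm 7
  have hrange : H = φ.range := by
    ext σ
    refine ⟨fun hσ => DihedralGroup.mem_range_toPerm h2 ?_, ?_⟩
    · exact apply_add_one_of_image_mem_P75 ((hH σ).1 hσ) ((hH σ⁻¹).1 (inv_mem hσ))
    · rintro ⟨g, rfl⟩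
      exact (hH _).2 (image_toPerm_mem_P75 g)
  exact ⟨(MulEquiv.subgroupCongr hrange).trans
    (MonoidHom.ofInjective (DihedralGroup.toPerm_injective h2 : Function.Injective φ)).symm⟩
end

section
/- Let s ∈ ℂ with s ≠ 0 and let p_1,...,p_7 ∈ ℂ[x_1,...,x_7] be the polynomials p_1 = −x_1x_3x_5 + s²x_6x_5² + s²x_1²x_7 − s x_2x_3x_4 + s³x_3x_6x_7, p_2 = −x_1x_6x_3 − s x_1x_2x_7 + s²x_3²x_4 + s²x_6²x_5 + s³x_1x_5x_4, p_3 = −x_1x_6x_4 + s²x_3x_4² − s x_6x_5x_7, p_4 = s³x_1x_4x_7 − x_2x_4x_6 − s x_3x_5x_4 + s²x_7x_6², p_5 = −x_2x_4x_7 + s²x_4²x_5 + s²x_6x_7², p_6 = s²x_5²x_4 − x_7x_2x_5 − s x_7x_1x_6 + s³x_3x_4x_7, p_7 = s²x_7²x_1 − x_3x_5x_7 − s x_4x_5x_6. For λ = (λ_1,...,λ_7) ∈ (ℂ*)^7 with λ_1 = 1, the following are equivalent: (i) for every i ∈ {1,...,7} there exists c_i ∈ ℂ with p_i(λ_1x_1,...,λ_7x_7)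 = c_i·p_i(x_1,...,x_7) as polynomials; (ii) there exists ζ ∈ ℂ with ζ^7 = 1 such that λ_j = ζ^{j−1} for all j = 1,...,7. -/
open MvPolynomial

set_option maxHeartbeats 1000000 in
/-- Let `p₁,…,p₇` be the defining equations of the one-parameter Rødland
subfamily `X_s ⊂ ℙ⁶` (with `s ≠ 0`; variables indexed by `Fin 7`, `xⱼ = X (j−1)`). A torus
element `λ ∈ (ℂ*)⁷` normalized by `λ₁ = 1` sends each `pᵢ` to a scalar multiple of itself
iff `λⱼ = ζ^{j−1}` for some seventh root of unity `ζ`. -/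
theorem roedland_torus_subgroup (s : ℂ) (hs : s ≠ 0)
    (p : Fin 7 → MvPolynomial (Fin 7) ℂ)
    (hp : p = ![
      -(X 0 * X 2 * X 4) + C (s ^ 2) * (X 5 * X 4 ^ 2) + C (s ^ 2) * (X 0 ^ 2 * X 6)
        - C s * (X 1 * X 2 * X 3) + C (s ^ 3) * (X 2 * X 5 * X 6),
      -(X 0 * X 5 * X 2) - C s * (X 0 * X 1 * X 6) + C (s ^ 2) * (X 2 ^ 2 * X 3)
        + C (s ^ 2) * (X 5 ^ 2 * X 4) + C (s ^ 3) * (X 0 * X 4 * X 3),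
      -(X 0 * X 5 * X 3) + C (s ^ 2) * (X 2 * X 3 ^ 2) - C s * (X 5 * X 4 * X 6),
      C (s ^ 3) * (X 0 * X 3 * X 6) - X 1 * X 3 * X 5 - C s * (X 2 * X 4 * X 3)
        + C (s ^ 2) * (X 6 * X 5 ^ 2),
      -(X 1 * X 3 * X 6) + C (s ^ 2) * (X 3 ^ 2 * X 4) + C (s ^ 2) * (X 5 * X 6 ^ 2),
      C (s ^ 2) * (X 4 ^ 2 * X 3) - X 6 * X 1 * X 4 - C s * (X 6 * X 0 * X 5)
        + C (s ^ 3) * (X 2 * X 3 * X 6),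
      C (s ^ 2) * (X 6 ^ 2 * X 0) - X 2 * X 4 * X 6 - C s * (X 3 * X 4 * X 5)])
    (l : Fin 7 → ℂ) (hl : ∀ j, l j ≠ 0) (hl1 : l 0 = 1) :
    (∀ i : Fin 7, ∃ c : ℂ,
        aeval (fun j : Fin 7 => C (l j) * X j) (p i) = C c * p i) ↔
      ∃ ζ : ℂ, ζ ^ 7 = 1 ∧ ∀ j : Fin 7, l j = ζ ^ (j : ℕ) := by
  subst hp
  constructor
  · intro h
    obtain ⟨c1, h0⟩ := h 0
    obtain ⟨c2, h1⟩ := h 1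
    have h0' : (aeval fun j : Fin 7 => C (l j) * X j)
        (-(X 0 * X 2 * X 4) + C (s ^ 2) * (X 5 * X 4 ^ 2) + C (s ^ 2) * (X 0 ^ 2 * X 6) - C s * (X 1 * X 2 * X 3) + C (s ^ 3) * (X 2 * X 5 * X 6) : MvPolynomial (Fin 7) ℂ)
      = C c1 * (-(X 0 * X 2 * X 4) + C (s ^ 2) * (X 5 * X 4 ^ 2) + C (s ^ 2) * (X 0 ^ 2 * X 6) - C s * (X 1 * X 2 * X 3) + C (s ^ 3) * (X 2 * X 5 * X 6)) := h0
    have h1' : (aeval fun j : Fin 7 => C (l j) * X j)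
        (-(X 0 * X 5 * X 2) - C s * (X 0 * X 1 * X 6) + C (s ^ 2) * (X 2 ^ 2 * X 3) + C (s ^ 2) * (X 5 ^ 2 * X 4) + C (s ^ 3) * (X 0 * X 4 * X 3) : MvPolynomial (Fin 7) ℂ)
      = C c2 * (-(X 0 * X 5 * X 2) - C s * (X 0 * X 1 * X 6) + C (s ^ 2) * (X 2 ^ 2 * X 3) + C (s ^ 2) * (X 5 ^ 2 * X 4) + C (s ^ 3) * (X 0 * X 4 * X 3)) := h1
    have eA := congrArg (eval (fun j : Fin 7 => if j = 0 ∨ j = 2 ∨ j = 4 then (1:ℂ) else 0)) h0'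
    have eC := congrArg (eval (fun j : Fin 7 => if j = 0 ∨ j = 6 then (1:ℂ) else 0)) h0'
    have eD := congrArg (eval (fun j : Fin 7 => if j = 1 ∨ j = 2 ∨ j = 3 then (1:ℂ) else 0)) h0'
    have f1 := congrArg (eval (fun j : Fin 7 => if j = 0 ∨ j = 2 ∨ j = 5 then (1:ℂ) else 0)) h1'
    have f2 := congrArg (eval (fun j : Fin 7 => if j = 0 ∨ j = 1 ∨ j = 6 then (1:ℂ) else 0)) h1'
    have f3 := congrArg (eval (fun j : Fin 7 => if j = 2 ∨ j = 3 then (1:ℂ) else 0)) h1'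
    have f4 := congrArg (eval (fun j : Fin 7 => if j = 4 ∨ j = 5 then (1:ℂ) else 0)) h1'
    have f5 := congrArg (eval (fun j : Fin 7 => if j = 0 ∨ j = 3 ∨ j = 4 then (1:ℂ) else 0)) h1'
    simp [hl1] at eA
    simp [hl1] at eC
    simp [hl1] at eD
    simp [hl1] at f1
    simp [hl1] at f2
    simp [hl1] at f3
    simp [hl1] at f4
    simp [hl1] at f5
    have e1 : l 2 * l 4 = c1 := eA
    have e2 : l 6 = c1 := by
      apply mul_left_cancel₀ (pow_ne_zero 2 hs); linear_combination eC
    have e3 : l 1 * l 2 * l 3 = c1 := by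
      apply mul_left_cancel₀ hs; linear_combination eD
    have g1 : l 5 * l 2 = c2 := f1
    have g2 : l 1 * l 6 = c2 := by
      apply mul_left_cancel₀ hs; linear_combination f2
    have g3 : l 2 ^ 2 * l 3 = c2 := by
      apply mul_left_cancel₀ (pow_ne_zero 2 hs); linear_combination f3
    have g4 : l 5 ^ 2 * l 4 = c2 := by
      apply mul_left_cancel₀ (pow_ne_zero 2 hs); linear_combination f4
    have g5 : l 4 * l 3 = c2 := by
      apply mul_left_cancel₀ (pow_ne_zero 3 hs); linear_combination f5
    have h45 : l 4 = l 1 * l 3 := by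
      apply mul_left_cancel₀ (hl 2); linear_combination e1 - e3
    have h54 : l 5 = l 1 * l 4 := by
      apply mul_left_cancel₀ (hl 2); linear_combination g1 - g2 + l 1 * e2 - l 1 * e1
    have h5' : l 5 = l 2 * l 3 := by
      apply mul_left_cancel₀ (hl 2); linear_combination g1 - g3
    have h2 : l 2 = l 1 ^ 2 := by
      apply mul_right_cancel₀ (hl 3); linear_combination -h5' + h54 + l 1 * h45
    have h3 : l 3 = l 1 ^ 3 := by
      apply mul_left_cancel₀ (mul_ne_zero (hl 1) (hl 3))
      linear_combination (-(l 3)) * h45 + g5 - g1 + l 2 * h54 + l 1 * l 2 * h45 + l 1 ^ 2 * l 3 * h2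
    have h4 : l 4 = l 1 ^ 4 := by rw [h45, h3]; ring
    have h5 : l 5 = l 1 ^ 5 := by rw [h54, h4]; ring
    have h6 : l 6 = l 1 ^ 6 := by linear_combination e2 - e1 + l 4 * h2 + l 1 ^ 2 * h4
    have key : l 1 ^ 14 = l 1 ^ 7 := by
      have hk := g4.trans g1.symm
      rw [h5, h4, h2] at hk
      linear_combination hk
    have hz7 : l 1 ^ 7 = 1 := by
      apply mul_left_cancel₀ (pow_ne_zero 7 (hl 1)); linear_combination key
    refine ⟨l 1, hz7, ?_⟩
    intro j
    fin_cases j <;> simp [hl1, h2, h3, h4, h5, h6]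
  · rintro ⟨z, hz7, hj⟩
    have hC : (C z : MvPolynomial (Fin 7) ℂ) ^ 7 = 1 := by rw [← C_pow, hz7, C_1]
    have hfun : (fun j : Fin 7 => (C (l j) * X j : MvPolynomial (Fin 7) ℂ))
        = fun j : Fin 7 => C (z ^ (j : ℕ)) * X j := by
      funext j; rw [hj]
    intro i
    fin_cases i
    · refine ⟨z ^ 6, ?_⟩
      show (aeval fun j : Fin 7 => C (l j) * X j)
          (-(X 0 * X 2 * X 4) + C (s ^ 2) * (X 5 * X 4 ^ 2) + C (s ^ 2) * (X 0 ^ 2 * X 6) - C s * (X 1 * X 2 * X 3) + C (s ^ 3) * (X 2 * X 5 * X 6) : MvPolynomial (Fin 7) ℂ)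
        = C (z ^ 6) * (-(X 0 * X 2 * X 4) + C (s ^ 2) * (X 5 * X 4 ^ 2) + C (s ^ 2) * (X 0 ^ 2 * X 6) - C s * (X 1 * X 2 * X 3) + C (s ^ 3) * (X 2 * X 5 * X 6))
      rw [hfun]
      simp only [map_add, map_sub, map_neg, map_mul, map_pow, map_one, aeval_X, aeval_C, C_pow,
        algebraMap_eq, show ((0:Fin 7):ℕ) = 0 from rfl, show ((1:Fin 7):ℕ) = 1 from rfl,
        show ((2:Fin 7):ℕ) = 2 from rfl, show ((3:Fin 7):ℕ) = 3 from rfl,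
        show ((4:Fin 7):ℕ) = 4 from rfl, show ((5:Fin 7):ℕ) = 5 from rfl,
        show ((6:Fin 7):ℕ) = 6 from rfl]
      linear_combination ((C z) ^ 6 * (C s) ^ 2 * (X 5 * X 4 ^ 2) + (C z) ^ 6 * (C s) ^ 3 * (X 2 * X 5 * X 6)) * hC
    · refine ⟨1, ?_⟩
      show (aeval fun j : Fin 7 => C (l j) * X j)
          (-(X 0 * X 5 * X 2) - C s * (X 0 * X 1 * X 6) + C (s ^ 2) * (X 2 ^ 2 * X 3) + C (s ^ 2) * (X 5 ^ 2 * X 4) + C (s ^ 3) * (X 0 * X 4 * X 3) : MvPolynomial (Fin 7) ℂ)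
        = C (1) * (-(X 0 * X 5 * X 2) - C s * (X 0 * X 1 * X 6) + C (s ^ 2) * (X 2 ^ 2 * X 3) + C (s ^ 2) * (X 5 ^ 2 * X 4) + C (s ^ 3) * (X 0 * X 4 * X 3))
      rw [hfun]
      simp only [map_add, map_sub, map_neg, map_mul, map_pow, map_one, aeval_X, aeval_C, C_pow,
        algebraMap_eq, show ((0:Fin 7):ℕ) = 0 from rfl, show ((1:Fin 7):ℕ) = 1 from rfl,
        show ((2:Fin 7):ℕ) = 2 from rfl, show ((3:Fin 7):ℕ) = 3 from rfl,
        show ((4:Fin 7):ℕ) = 4 from rfl, show ((5:Fin 7):ℕ) = 5 from rfl,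
        show ((6:Fin 7):ℕ) = 6 from rfl]
      linear_combination (-(X 0 * X 5 * X 2) - C s * (X 0 * X 1 * X 6) + (C s) ^ 2 * (X 2 ^ 2 * X 3) + (C s) ^ 2 * ((C z) ^ 7 + 1) * (X 5 ^ 2 * X 4) + (C s) ^ 3 * (X 0 * X 4 * X 3)) * hC
    · refine ⟨z, ?_⟩
      show (aeval fun j : Fin 7 => C (l j) * X j)
          (-(X 0 * X 5 * X 3) + C (s ^ 2) * (X 2 * X 3 ^ 2) - C s * (X 5 * X 4 * X 6) : MvPolynomial (Fin 7) ℂ)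
        = C (z) * (-(X 0 * X 5 * X 3) + C (s ^ 2) * (X 2 * X 3 ^ 2) - C s * (X 5 * X 4 * X 6))
      rw [hfun]
      simp only [map_add, map_sub, map_neg, map_mul, map_pow, map_one, aeval_X, aeval_C, C_pow,
        algebraMap_eq, show ((0:Fin 7):ℕ) = 0 from rfl, show ((1:Fin 7):ℕ) = 1 from rfl,
        show ((2:Fin 7):ℕ) = 2 from rfl, show ((3:Fin 7):ℕ) = 3 from rfl,
        show ((4:Fin 7):ℕ) = 4 from rfl, show ((5:Fin 7):ℕ) = 5 from rfl,
        show ((6:Fin 7):ℕ) = 6 from rfl]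
      linear_combination (C z * (-(X 0 * X 5 * X 3) + (C s) ^ 2 * (X 2 * X 3 ^ 2) - C s * ((C z) ^ 7 + 1) * (X 5 * X 4 * X 6))) * hC
    · refine ⟨z ^ 2, ?_⟩
      show (aeval fun j : Fin 7 => C (l j) * X j)
          (C (s ^ 3) * (X 0 * X 3 * X 6) - X 1 * X 3 * X 5 - C s * (X 2 * X 4 * X 3) + C (s ^ 2) * (X 6 * X 5 ^ 2) : MvPolynomial (Fin 7) ℂ)
        = C (z ^ 2) * (C (s ^ 3) * (X 0 * X 3 * X 6) - X 1 * X 3 * X 5 - C s * (X 2 * X 4 * X 3) + C (s ^ 2) * (X 6 * X 5 ^ 2))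
      rw [hfun]
      simp only [map_add, map_sub, map_neg, map_mul, map_pow, map_one, aeval_X, aeval_C, C_pow,
        algebraMap_eq, show ((0:Fin 7):ℕ) = 0 from rfl, show ((1:Fin 7):ℕ) = 1 from rfl,
        show ((2:Fin 7):ℕ) = 2 from rfl, show ((3:Fin 7):ℕ) = 3 from rfl,
        show ((4:Fin 7):ℕ) = 4 from rfl, show ((5:Fin 7):ℕ) = 5 from rfl,
        show ((6:Fin 7):ℕ) = 6 from rfl]
      linear_combination ((C z) ^ 2 * ((C s) ^ 3 * (X 0 * X 3 * X 6) - X 1 * X 3 * X 5 - C s * (X 2 * X 4 * X 3) + (C s) ^ 2 * ((C z) ^ 7 + 1) * (X 6 * X 5 ^ 2))) * hC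
    · refine ⟨z ^ 3, ?_⟩
      show (aeval fun j : Fin 7 => C (l j) * X j)
          (-(X 1 * X 3 * X 6) + C (s ^ 2) * (X 3 ^ 2 * X 4) + C (s ^ 2) * (X 5 * X 6 ^ 2) : MvPolynomial (Fin 7) ℂ)
        = C (z ^ 3) * (-(X 1 * X 3 * X 6) + C (s ^ 2) * (X 3 ^ 2 * X 4) + C (s ^ 2) * (X 5 * X 6 ^ 2))
      rw [hfun]
      simp only [map_add, map_sub, map_neg, map_mul, map_pow, map_one, aeval_X, aeval_C, C_pow,
        algebraMap_eq, show ((0:Fin 7):ℕ) = 0 from rfl, show ((1:Fin 7):ℕ) = 1 from rfl,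
        show ((2:Fin 7):ℕ) = 2 from rfl, show ((3:Fin 7):ℕ) = 3 from rfl,
        show ((4:Fin 7):ℕ) = 4 from rfl, show ((5:Fin 7):ℕ) = 5 from rfl,
        show ((6:Fin 7):ℕ) = 6 from rfl]
      linear_combination ((C z) ^ 3 * (-(X 1 * X 3 * X 6) + (C s) ^ 2 * (X 3 ^ 2 * X 4) + (C s) ^ 2 * ((C z) ^ 7 + 1) * (X 5 * X 6 ^ 2))) * hC
    · refine ⟨z ^ 4, ?_⟩
      show (aeval fun j : Fin 7 => C (l j) * X j)
          (C (s ^ 2) * (X 4 ^ 2 * X 3) - X 6 * X 1 * X 4 - C s * (X 6 * X 0 * X 5) + C (s ^ 3) * (X 2 * X 3 * X 6) : MvPolynomial (Fin 7) ℂ)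
        = C (z ^ 4) * (C (s ^ 2) * (X 4 ^ 2 * X 3) - X 6 * X 1 * X 4 - C s * (X 6 * X 0 * X 5) + C (s ^ 3) * (X 2 * X 3 * X 6))
      rw [hfun]
      simp only [map_add, map_sub, map_neg, map_mul, map_pow, map_one, aeval_X, aeval_C, C_pow,
        algebraMap_eq, show ((0:Fin 7):ℕ) = 0 from rfl, show ((1:Fin 7):ℕ) = 1 from rfl,
        show ((2:Fin 7):ℕ) = 2 from rfl, show ((3:Fin 7):ℕ) = 3 from rfl,
        show ((4:Fin 7):ℕ) = 4 from rfl, show ((5:Fin 7):ℕ) = 5 from rfl,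
        show ((6:Fin 7):ℕ) = 6 from rfl]
      linear_combination ((C z) ^ 4 * ((C s) ^ 2 * (X 4 ^ 2 * X 3) - X 6 * X 1 * X 4 - C s * (X 6 * X 0 * X 5) + (C s) ^ 3 * (X 2 * X 3 * X 6))) * hC
    · refine ⟨z ^ 5, ?_⟩
      show (aeval fun j : Fin 7 => C (l j) * X j)
          (C (s ^ 2) * (X 6 ^ 2 * X 0) - X 2 * X 4 * X 6 - C s * (X 3 * X 4 * X 5) : MvPolynomial (Fin 7) ℂ)
        = C (z ^ 5) * (C (s ^ 2) * (X 6 ^ 2 * X 0) - X 2 * X 4 * X 6 - C s * (X 3 * X 4 * X 5))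
      rw [hfun]
      simp only [map_add, map_sub, map_neg, map_mul, map_pow, map_one, aeval_X, aeval_C, C_pow,
        algebraMap_eq, show ((0:Fin 7):ℕ) = 0 from rfl, show ((1:Fin 7):ℕ) = 1 from rfl,
        show ((2:Fin 7):ℕ) = 2 from rfl, show ((3:Fin 7):ℕ) = 3 from rfl,
        show ((4:Fin 7):ℕ) = 4 from rfl, show ((5:Fin 7):ℕ) = 5 from rfl,
        show ((6:Fin 7):ℕ) = 6 from rfl]
      linear_combination ((C z) ^ 5 * ((C s) ^ 2 * (X 6 ^ 2 * X 0) - X 2 * X 4 * X 6 - C s * (X 3 * X 4 * X 5))) * hC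
end

section
/- Let s ∈ ℂ and let N(s) be the skew-symmetric 5×5 matrix over ℂ[x_1,...,x_7] with rows: (0, s x_7², x_1x_2, −x_3x_4, −s x_5²), (−s x_7², 0, s(x_3+x_4), x_5, −x_6), (−x_1x_2, −s(x_3+x_4), 0, s x_6, x_7), (x_3x_4, −x_5, −s x_6, 0, s(x_1+x_2)), (s x_5², x_6, −x_7, −s(x_1+x_2), 0). Let p_1 = x_5x_7 + s x_6² − s²(x_1+x_2)(x_3+x_4), p_2 = x_3x_4x_7 + s(x_1+x_2)x_1x_2 − s²x_5²x_6, p_3 = x_3x_4x_6 + s x_5³ − s²(x_1+x_2)x_7², p_4 = x_1x_2x_6 + s x_7³ − s²(x_3+x_4)x_5², p_5 = x_1x_2x_5 + s x_3x_4(x_3+x_4) − s²x_6x_7². Then there is a permutation σ of {1,...,5} such that for every i, the determinant of the 4×4 submatrix of N(s) obtained by deleting row i and column i equals p_{σ(i)}²; i.e. the polynomials p_1,...,p_5 are (up to sign) the principal Pfaffians of N(s). -/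
open MvPolynomial Matrix

theorem det_fin_four' {R : Type*} [CommRing R] (M : Matrix (Fin 4) (Fin 4) R) :
    M.det =
      M 0 0 * M 1 1 * M 2 2 * M 3 3 - M 0 0 * M 1 1 * M 2 3 * M 3 2 -
      M 0 0 * M 1 2 * M 2 1 * M 3 3 + M 0 0 * M 1 2 * M 2 3 * M 3 1 +
      M 0 0 * M 1 3 * M 2 1 * M 3 2 - M 0 0 * M 1 3 * M 2 2 * M 3 1 -
      M 0 1 * M 1 0 * M 2 2 * M 3 3 + M 0 1 * M 1 0 * M 2 3 * M 3 2 +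
      M 0 1 * M 1 2 * M 2 0 * M 3 3 - M 0 1 * M 1 2 * M 2 3 * M 3 0 -
      M 0 1 * M 1 3 * M 2 0 * M 3 2 + M 0 1 * M 1 3 * M 2 2 * M 3 0 +
      M 0 2 * M 1 0 * M 2 1 * M 3 3 - M 0 2 * M 1 0 * M 2 3 * M 3 1 -
      M 0 2 * M 1 1 * M 2 0 * M 3 3 + M 0 2 * M 1 1 * M 2 3 * M 3 0 +
      M 0 2 * M 1 3 * M 2 0 * M 3 1 - M 0 2 * M 1 3 * M 2 1 * M 3 0 -
      M 0 3 * M 1 0 * M 2 1 * M 3 2 + M 0 3 * M 1 0 * M 2 2 * M 3 1 +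
      M 0 3 * M 1 1 * M 2 0 * M 3 2 - M 0 3 * M 1 1 * M 2 2 * M 3 0 -
      M 0 3 * M 1 2 * M 2 0 * M 3 1 + M 0 3 * M 1 2 * M 2 1 * M 3 0 := by
  rw [Matrix.det_succ_row_zero]
  simp [Fin.sum_univ_succ, Matrix.det_fin_three, Fin.succAbove,
    show ((2:Fin 3).succ)=(3:Fin 4) from rfl, show (Fin.castSucc (2:Fin 3))=(2:Fin 4) from rfl,
    show ((1:Fin 4) < (2:Fin 3).succ) from by decide]
  ring

set_option maxHeartbeats 1000000 in
/-- Over `ℂ[x₁,…,x₇]` (variables indexed by `Fin 7`, `xⱼ = X (j−1)`), the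
skew-symmetric `5×5` matrix `N(s)` of the one-parameter Böhm subfamily has the polynomials
`p₁,…,p₅` as its principal Pfaffians up to sign and reordering: there is a permutation `σ`
such that deleting row `i` and column `i` of `N(s)` yields a matrix whose determinant is
`p_{σ(i)}²`. -/
theorem boehm_principal_pfaffians (s : ℂ)
    (N : Matrix (Fin 5) (Fin 5) (MvPolynomial (Fin 7) ℂ))
    (hN : N = !![0, C s * X 6 ^ 2, X 0 * X 1, -(X 2 * X 3), -(C s * X 4 ^ 2);
                 -(C s * X 6 ^ 2), 0, C s * (X 2 + X 3), X 4, -X 5;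
                 -(X 0 * X 1), -(C s * (X 2 + X 3)), 0, C s * X 5, X 6;
                 X 2 * X 3, -X 4, -(C s * X 5), 0, C s * (X 0 + X 1);
                 C s * X 4 ^ 2, X 5, -X 6, -(C s * (X 0 + X 1)), 0])
    (p : Fin 5 → MvPolynomial (Fin 7) ℂ)
    (hp : p = ![
      X 4 * X 6 + C s * X 5 ^ 2 - C (s ^ 2) * ((X 0 + X 1) * (X 2 + X 3)),
      X 2 * X 3 * X 6 + C s * ((X 0 + X 1) * X 0 * X 1) - C (s ^ 2) * (X 4 ^ 2 * X 5),
      X 2 * X 3 * X 5 + C s * X 4 ^ 3 - C (s ^ 2) * ((X 0 + X 1) * X 6 ^ 2),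
      X 0 * X 1 * X 5 + C s * X 6 ^ 3 - C (s ^ 2) * ((X 2 + X 3) * X 4 ^ 2),
      X 0 * X 1 * X 4 + C s * (X 2 * X 3 * (X 2 + X 3)) - C (s ^ 2) * (X 5 * X 6 ^ 2)]) :
    ∃ σ : Equiv.Perm (Fin 5), ∀ i : Fin 5,
      (N.submatrix i.succAbove i.succAbove).det = p (σ i) ^ 2 := by
  refine ⟨Equiv.refl _, fun i => ?_⟩
  subst hN hp
  have e0 : ∀ h : 0 < 5, (⟨0, h⟩ : Fin 5) = 0 := fun _ => rfl
  have e1 : ∀ h : 1 < 5, (⟨1, h⟩ : Fin 5) = 1 := fun _ => rfl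
  have e2 : ∀ h : 2 < 5, (⟨2, h⟩ : Fin 5) = 2 := fun _ => rfl
  have e3 : ∀ h : 3 < 5, (⟨3, h⟩ : Fin 5) = 3 := fun _ => rfl
  have e4 : ∀ h : 4 < 5, (⟨4, h⟩ : Fin 5) = 4 := fun _ => rfl
  have h0 : Fin.succAbove (0 : Fin 5) = ![1,2,3,4] := by decide
  have h1 : Fin.succAbove (1 : Fin 5) = ![0,2,3,4] := by decide
  have h2 : Fin.succAbove (2 : Fin 5) = ![0,1,3,4] := by decide
  have h3 : Fin.succAbove (3 : Fin 5) = ![0,1,2,4] := by decide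
  have h4 : Fin.succAbove (4 : Fin 5) = ![0,1,2,3] := by decide
  fin_cases i <;> rw [det_fin_four'] <;>
    simp only [Equiv.refl_apply, Matrix.submatrix_apply, e0, e1, e2, e3, e4, h0, h1, h2, h3, h4,
      Matrix.cons_val_zero, Matrix.cons_val_one, Matrix.head_cons, Matrix.cons_val_two,
      Matrix.cons_val_three, Matrix.cons_val_four, Matrix.tail_cons, Matrix.head_fin_const,
      Matrix.empty_val', Matrix.cons_val_fin_one, Matrix.of_apply, Matrix.cons_val', map_pow] <;>
    ring1
end

section
/- Let s ∈ ℂ with s ≠ 0 and let p_1,...,p_5 ∈ ℂ[x_1,...,x_7] be the polynomials p_1 = x_5x_7 + s x_6² − s²(x_1+x_2)(x_3+x_4), p_2 = x_3x_4x_7 + s(x_1+x_2)x_1x_2 − s²x_5²x_6, p_3 = x_3x_4x_6 + s x_5³ − s²(x_1+x_2)x_7², p_4 = x_1x_2x_6 + s x_7³ − s²(x_3+x_4)x_5², p_5 = x_1x_2x_5 + s x_3x_4(x_3+x_4) − s²x_6x_7². For λ = (λ_1,...,λ_7) ∈ (ℂ*)^7 with λ_7 = 1, the following are equivalent: (i)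 for every i ∈ {1,...,5} there exists c_i ∈ ℂ with p_i(λ_1x_1,...,λ_7x_7) = c_i·p_i(x_1,...,x_7) as polynomials; (ii) there exists ζ ∈ ℂ with ζ^{13} = 1 such that (λ_1,...,λ_7) = (ζ³, ζ³, ζ^{11}, ζ^{11}, ζ, ζ^7, 1). In particular this subgroup is cyclic of order 13. -/
open MvPolynomial

lemma vec7_5' {α : Type*} (a b c d e f g : α) : ![a,b,c,d,e,f,g] 5 = f := rfl
lemma vec7_6' {α : Type*} (a b c d e f g : α) : ![a,b,c,d,e,f,g] 6 = g := rfl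

set_option maxHeartbeats 1000000 in
/-- Let `p₁,…,p₅` be the defining equations of the one-parameter Böhm
subfamily `X_s ⊂ ℙ⁶` (with `s ≠ 0`; variables indexed by `Fin 7`, `xⱼ = X (j−1)`). A torus
element `λ ∈ (ℂ*)⁷` normalized by `λ₇ = 1` sends each `pᵢ` to a scalar multiple of itself
iff `(λ₁,…,λ₇) = (ζ³, ζ³, ζ¹¹, ζ¹¹, ζ, ζ⁷, 1)` for some thirteenth root of unity `ζ`; in
particular this subgroup is cyclic of order 13. -/
theorem boehm_torus_subgroup (s : ℂ) (hs : s ≠ 0)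
    (p : Fin 5 → MvPolynomial (Fin 7) ℂ)
    (hp : p = ![
      X 4 * X 6 + C s * X 5 ^ 2 - C (s ^ 2) * ((X 0 + X 1) * (X 2 + X 3)),
      X 2 * X 3 * X 6 + C s * ((X 0 + X 1) * X 0 * X 1) - C (s ^ 2) * (X 4 ^ 2 * X 5),
      X 2 * X 3 * X 5 + C s * X 4 ^ 3 - C (s ^ 2) * ((X 0 + X 1) * X 6 ^ 2),
      X 0 * X 1 * X 5 + C s * X 6 ^ 3 - C (s ^ 2) * ((X 2 + X 3) * X 4 ^ 2),
      X 0 * X 1 * X 4 + C s * (X 2 * X 3 * (X 2 + X 3)) - C (s ^ 2) * (X 5 * X 6 ^ 2)])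
    (l : Fin 7 → ℂ) (hl : ∀ j, l j ≠ 0) (hl7 : l 6 = 1) :
    (∀ i : Fin 5, ∃ c : ℂ,
        aeval (fun j : Fin 7 => C (l j) * X j) (p i) = C c * p i) ↔
      ∃ ζ : ℂ, ζ ^ 13 = 1 ∧
        l = ![ζ ^ 3, ζ ^ 3, ζ ^ 11, ζ ^ 11, ζ, ζ ^ 7, 1] := by
  subst hp
  constructor
  · intro h
    obtain ⟨c1, h1⟩ := h 0
    obtain ⟨c3, h3⟩ := h 2
    obtain ⟨c4, h4⟩ := h 3
    simp only [Matrix.cons_val_zero, Matrix.cons_val_one, Matrix.head_cons,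
      Matrix.cons_val_two, Matrix.tail_cons, Matrix.cons_val_three] at h1 h3 h4
    -- equations from p₁
    have e1 := congrArg (aeval (![0,0,0,0,1,0,1] : Fin 7 → ℂ)) h1
    simp [aeval_X, aeval_C, vec7_5', vec7_6', hl7] at e1
    have e2 := congrArg (aeval (![0,0,0,0,0,1,0] : Fin 7 → ℂ)) h1
    simp [aeval_X, aeval_C, vec7_5', vec7_6'] at e2
    have e3 := congrArg (aeval (![1,0,1,0,0,0,0] : Fin 7 → ℂ)) h1
    simp [aeval_X, aeval_C, vec7_5', vec7_6'] at e3
    have e4 := congrArg (aeval (![1,0,0,1,0,0,0] : Fin 7 → ℂ)) h1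
    simp [aeval_X, aeval_C, vec7_5', vec7_6'] at e4
    -- equations from p₃
    have e5 := congrArg (aeval (![0,0,0,0,1,0,0] : Fin 7 → ℂ)) h3
    simp [aeval_X, aeval_C, vec7_5', vec7_6'] at e5
    have e6 := congrArg (aeval (![1,0,0,0,0,0,1] : Fin 7 → ℂ)) h3
    simp [aeval_X, aeval_C, vec7_5', vec7_6', hl7] at e6
    have e7 := congrArg (aeval (![0,1,0,0,0,0,1] : Fin 7 → ℂ)) h3
    simp [aeval_X, aeval_C, vec7_5', vec7_6', hl7] at e7
    -- equations from p₄
    have e8 := congrArg (aeval (![0,0,0,0,0,0,1] : Fin 7 → ℂ)) h4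
    simp [aeval_X, aeval_C, vec7_5', vec7_6', hl7] at e8
    have e9 := congrArg (aeval (![1,1,0,0,0,1,0] : Fin 7 → ℂ)) h4
    simp [aeval_X, aeval_C, vec7_5', vec7_6'] at e9
    -- scalar relations
    have f2 : l 5 ^ 2 = c1 := mul_left_cancel₀ hs (by linear_combination e2)
    have f3 : l 0 * l 2 = c1 := mul_left_cancel₀ (pow_ne_zero 2 hs) (by linear_combination e3)
    have f4 : l 0 * l 3 = c1 := mul_left_cancel₀ (pow_ne_zero 2 hs) (by linear_combination e4)
    have f5 : l 4 ^ 3 = c3 := mul_left_cancel₀ hs (by linear_combination e5)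
    have f6 : l 0 = c3 := mul_left_cancel₀ (pow_ne_zero 2 hs) (by linear_combination e6)
    have f7 : l 1 = c3 := mul_left_cancel₀ (pow_ne_zero 2 hs) (by linear_combination e7)
    have f8 : c4 = 1 :=
      (mul_right_cancel₀ hs (show (1:ℂ) * s = c4 * s by linear_combination e8)).symm
    have f9 : l 0 * l 1 * l 5 = c4 := e9
    have hl0 : l 0 = l 4 ^ 3 := f6.trans f5.symm
    have hl1 : l 1 = l 4 ^ 3 := f7.trans f5.symm
    have E1 : l 5 ^ 2 = l 4 := f2.trans e1.symm
    have E2 : l 4 ^ 3 * l 4 ^ 3 * l 5 = 1 := by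
      linear_combination f9 + f8 - l 4 ^ 3 * l 5 * hl1 - l 1 * l 5 * hl0
    have hz13 : l 4 ^ 13 = 1 := by
      linear_combination (l 4 ^ 6 * l 5 + 1) * E2 - l 4 ^ 12 * E1
    have hl5 : l 5 = l 4 ^ 7 :=
      mul_left_cancel₀ (pow_ne_zero 6 (hl 4)) (by linear_combination E2 - hz13)
    have hl2 : l 2 = l 4 ^ 11 := by
      refine mul_left_cancel₀ (pow_ne_zero 3 (hl 4)) ?_
      linear_combination f3 - e1 - l 4 * hz13 - l 2 * hl0
    have hl3 : l 3 = l 4 ^ 11 := by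
      refine mul_left_cancel₀ (pow_ne_zero 3 (hl 4)) ?_
      linear_combination f4 - e1 - l 4 * hz13 - l 3 * hl0
    refine ⟨l 4, hz13, ?_⟩
    funext j
    fin_cases j <;>
      simp only [Matrix.cons_val_zero, Matrix.cons_val_one, Matrix.head_cons,
        Matrix.cons_val_two, Matrix.tail_cons, Matrix.cons_val_three, vec7_5', vec7_6',
        Matrix.cons_val_four, Fin.isValue]
    · exact hl0
    · exact hl1
    · exact hl2
    · exact hl3
    · rfl
    · exact hl5
    · exact hl7
  · rintro ⟨ζ, hζ, rfl⟩
    have h13 : (C ζ : MvPolynomial (Fin 7) ℂ) ^ 13 = 1 := by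
      rw [← map_pow, hζ, map_one]
    have v0 : (![ζ^3,ζ^3,ζ^11,ζ^11,ζ,ζ^7,(1:ℂ)]) 0 = ζ^3 := rfl
    have v1 : (![ζ^3,ζ^3,ζ^11,ζ^11,ζ,ζ^7,(1:ℂ)]) 1 = ζ^3 := rfl
    have v2 : (![ζ^3,ζ^3,ζ^11,ζ^11,ζ,ζ^7,(1:ℂ)]) 2 = ζ^11 := rfl
    have v3 : (![ζ^3,ζ^3,ζ^11,ζ^11,ζ,ζ^7,(1:ℂ)]) 3 = ζ^11 := rfl
    have v4 : (![ζ^3,ζ^3,ζ^11,ζ^11,ζ,ζ^7,(1:ℂ)]) 4 = ζ := rfl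
    have v5 : (![ζ^3,ζ^3,ζ^11,ζ^11,ζ,ζ^7,(1:ℂ)]) 5 = ζ^7 := rfl
    have v6 : (![ζ^3,ζ^3,ζ^11,ζ^11,ζ,ζ^7,(1:ℂ)]) 6 = 1 := rfl
    intro i
    fin_cases i
    · refine ⟨ζ, ?_⟩
      show aeval (fun j : Fin 7 => C (![ζ^3,ζ^3,ζ^11,ζ^11,ζ,ζ^7,(1:ℂ)] j) * X j)
        (X 4 * X 6 + C s * X 5 ^ 2 - C (s ^ 2) * ((X 0 + X 1) * (X 2 + X 3)) : MvPolynomial (Fin 7) ℂ) = C (ζ) * (X 4 * X 6 + C s * X 5 ^ 2 - C (s ^ 2) * ((X 0 + X 1) * (X 2 + X 3)))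
      simp only [map_add, map_sub, map_mul, map_pow, aeval_X, aeval_C, map_one,
        MvPolynomial.algebraMap_eq, v0, v1, v2, v3, v4, v5, v6]
      linear_combination (C s * X 5 ^ 2 * C ζ - C s ^ 2 * ((X 0 + X 1) * (X 2 + X 3)) * C ζ) * h13
    · refine ⟨ζ ^ 9, ?_⟩
      show aeval (fun j : Fin 7 => C (![ζ^3,ζ^3,ζ^11,ζ^11,ζ,ζ^7,(1:ℂ)] j) * X j)
        (X 2 * X 3 * X 6 + C s * ((X 0 + X 1) * X 0 * X 1) - C (s ^ 2) * (X 4 ^ 2 * X 5) : MvPolynomial (Fin 7) ℂ) = C (ζ ^ 9) * (X 2 * X 3 * X 6 + C s * ((X 0 + X 1) * X 0 * X 1) - C (s ^ 2) * (X 4 ^ 2 * X 5))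
      simp only [map_add, map_sub, map_mul, map_pow, aeval_X, aeval_C, map_one,
        MvPolynomial.algebraMap_eq, v0, v1, v2, v3, v4, v5, v6]
      linear_combination (X 2 * X 3 * X 6 * C ζ ^ 9) * h13
    · refine ⟨ζ ^ 3, ?_⟩
      show aeval (fun j : Fin 7 => C (![ζ^3,ζ^3,ζ^11,ζ^11,ζ,ζ^7,(1:ℂ)] j) * X j)
        (X 2 * X 3 * X 5 + C s * X 4 ^ 3 - C (s ^ 2) * ((X 0 + X 1) * X 6 ^ 2) : MvPolynomial (Fin 7) ℂ) = C (ζ ^ 3) * (X 2 * X 3 * X 5 + C s * X 4 ^ 3 - C (s ^ 2) * ((X 0 + X 1) * X 6 ^ 2))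
      simp only [map_add, map_sub, map_mul, map_pow, aeval_X, aeval_C, map_one,
        MvPolynomial.algebraMap_eq, v0, v1, v2, v3, v4, v5, v6]
      linear_combination (X 2 * X 3 * X 5 * C ζ ^ 3 * (C ζ ^ 13 + 1)) * h13
    · refine ⟨1, ?_⟩
      show aeval (fun j : Fin 7 => C (![ζ^3,ζ^3,ζ^11,ζ^11,ζ,ζ^7,(1:ℂ)] j) * X j)
        (X 0 * X 1 * X 5 + C s * X 6 ^ 3 - C (s ^ 2) * ((X 2 + X 3) * X 4 ^ 2) : MvPolynomial (Fin 7) ℂ) = C (1) * (X 0 * X 1 * X 5 + C s * X 6 ^ 3 - C (s ^ 2) * ((X 2 + X 3) * X 4 ^ 2))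
      simp only [map_add, map_sub, map_mul, map_pow, aeval_X, aeval_C, map_one,
        MvPolynomial.algebraMap_eq, v0, v1, v2, v3, v4, v5, v6]
      linear_combination (X 0 * X 1 * X 5 - C s ^ 2 * ((X 2 + X 3) * X 4 ^ 2)) * h13
    · refine ⟨ζ ^ 7, ?_⟩
      show aeval (fun j : Fin 7 => C (![ζ^3,ζ^3,ζ^11,ζ^11,ζ,ζ^7,(1:ℂ)] j) * X j)
        (X 0 * X 1 * X 4 + C s * (X 2 * X 3 * (X 2 + X 3)) - C (s ^ 2) * (X 5 * X 6 ^ 2) : MvPolynomial (Fin 7) ℂ) = C (ζ ^ 7) * (X 0 * X 1 * X 4 + C s * (X 2 * X 3 * (X 2 + X 3)) - C (s ^ 2) * (X 5 * X 6 ^ 2))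
      simp only [map_add, map_sub, map_mul, map_pow, aeval_X, aeval_C, map_one,
        MvPolynomial.algebraMap_eq, v0, v1, v2, v3, v4, v5, v6]
      linear_combination (C s * (X 2 * X 3 * (X 2 + X 3)) * C ζ ^ 7 * (C ζ ^ 13 + 1)) * h13
end

section
/- Let s ∈ ℂ with s ≠ 0 and let p_1,...,p_5 ∈ ℂ[x_1,...,x_7] be the polynomials p_1 = x_5x_7 + s x_6² − s²(x_1+x_2)(x_3+x_4), p_2 = x_3x_4x_7 + s(x_1+x_2)x_1x_2 − s²x_5²x_6, p_3 = x_3x_4x_6 + s x_5³ − s²(x_1+x_2)x_7², p_4 = x_1x_2x_6 + s x_7³ − s²(x_3+x_4)x_5², p_5 = x_1x_2x_5 + s x_3x_4(x_3+x_4) − s²x_6x_7². For each k ∈ {1,2,3,4}, let e_k ∈ ℂ^7 be the k-th standard basis vector. Then for each such k: (a) p_i(e_k) = 0 for all i = 1,...,5, and (b) the 5×7 Jacobian matrix (∂p_i/∂x_j) evaluated at e_k has rank exactly 2. In particular the four coordinate points (1:0:0:0:0:0:0), (0:1:0:0:0:0:0), (0:0:1:0:0:0:0), (0:0:0:1:0:0:0)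 are singular points of the threefold X_s ⊂ ℙ^6 defined by p_1,...,p_5. -/
/-!
Every monomial of every `pᵢ` involves a variable other than `x_k` (`k = 1, …, 4`), so `pᵢ(e_k) = 0`.
At `e_k` the entry `∂pᵢ/∂xⱼ` only picks up monomials of the form `x_k^(d-1) xⱼ`; these occur in
`p₁` (coefficient `-s²`) and in one more equation, `p₂` or `p₅` (coefficient `s`), in disjoint
columns. So the Jacobian has exactly two nonzero rows, independent as soon as `s ≠ 0`.
-/

open MvPolynomial

noncomputable def MvPolynomial.jacobianAt {ι σ R : Type*} [CommSemiring R]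
    (p : ι → MvPolynomial σ R) (x : σ → R) : Matrix ι σ R :=
  Matrix.of fun i j => eval x (pderiv j (p i))

theorem linearIndependent_pair_of_triangular {ι R : Type*} [Ring R] [NoZeroDivisors R]
    {u v : ι → R} {c₁ c₂ : ι} (hu : u c₁ ≠ 0) (hv₁ : v c₁ = 0) (hv₂ : v c₂ ≠ 0) :
    LinearIndependent R ![u, v] := by
  rw [LinearIndependent.pair_iff]
  intro a b hab
  have ha : a = 0 := by simpa [hv₁, hu] using congrFun hab c₁
  subst ha
  exact ⟨rfl, by simpa [hv₂] using congrFun hab c₂⟩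

theorem Matrix.rank_eq_two_of_rows {m n K : Type*} [Fintype n] [Finite m] [Field K]
    {A : Matrix m n K} {r₁ r₂ : m} (hA : ∀ i, i ≠ r₁ → i ≠ r₂ → ∀ j, A i j = 0)
    (hli : LinearIndependent K ![A r₁, A r₂]) : A.rank = 2 := by
  have hspan :
      Submodule.span K (Set.range A.row) = Submodule.span K (Set.range ![A r₁, A r₂]) := by
    apply le_antisymm
    · rw [Submodule.span_le]
      rintro _ ⟨i, rfl⟩
      by_cases h₁ : i = r₁
      · exact Submodule.subset_span ⟨0, by simp [h₁, Matrix.row]⟩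
      by_cases h₂ : i = r₂
      · exact Submodule.subset_span ⟨1, by simp [h₂, Matrix.row]⟩
      rw [show A.row i = 0 from funext (hA i h₁ h₂)]
      exact Submodule.zero_mem _
    · refine Submodule.span_mono ?_
      rintro _ ⟨t, rfl⟩
      fin_cases t
      exacts [⟨r₁, rfl⟩, ⟨r₂, rfl⟩]
  rw [Matrix.rank_eq_finrank_span_row, hspan, finrank_span_eq_card hli, Fintype.card_fin]

section Boehm

variable {K : Type*} [Field K]

/-- The variable `xⱼ` of the paper is `X (j - 1)`. -/
noncomputable def boehmPoly (s : K) : Fin 5 → MvPolynomial (Fin 7) K := ![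
  X 4 * X 6 + C s * X 5 ^ 2 - C (s ^ 2) * ((X 0 + X 1) * (X 2 + X 3)),
  X 2 * X 3 * X 6 + C s * ((X 0 + X 1) * X 0 * X 1) - C (s ^ 2) * (X 4 ^ 2 * X 5),
  X 2 * X 3 * X 5 + C s * X 4 ^ 3 - C (s ^ 2) * ((X 0 + X 1) * X 6 ^ 2),
  X 0 * X 1 * X 5 + C s * X 6 ^ 3 - C (s ^ 2) * ((X 2 + X 3) * X 4 ^ 2),
  X 0 * X 1 * X 4 + C s * (X 2 * X 3 * (X 2 + X 3)) - C (s ^ 2) * (X 5 * X 6 ^ 2)]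

theorem eval_single_boehmPoly (s : K) {k : Fin 7} (hk : (k : ℕ) < 4) (i : Fin 5) :
    eval (Pi.single k 1) (boehmPoly s i) = 0 := by
  fin_cases k <;> (try simp at hk) <;> fin_cases i <;> simp [boehmPoly]

theorem jacobianAt_boehmPoly_single_zero (s : K) :
    jacobianAt (boehmPoly s) (Pi.single 0 1) =
      Matrix.of ![![0, 0, -s ^ 2, -s ^ 2, 0, 0, 0], ![0, s, 0, 0, 0, 0, 0], 0, 0, 0] := by
  ext i j
  fin_cases i <;> simp [jacobianAt, boehmPoly, pderiv_X, Pi.single_apply] <;> fin_cases j <;> simp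

theorem jacobianAt_boehmPoly_single_one (s : K) :
    jacobianAt (boehmPoly s) (Pi.single 1 1) =
      Matrix.of ![![0, 0, -s ^ 2, -s ^ 2, 0, 0, 0], ![s, 0, 0, 0, 0, 0, 0], 0, 0, 0] := by
  ext i j
  fin_cases i <;> simp [jacobianAt, boehmPoly, pderiv_X, Pi.single_apply] <;> fin_cases j <;> simp

theorem jacobianAt_boehmPoly_single_two (s : K) :
    jacobianAt (boehmPoly s) (Pi.single 2 1) =
      Matrix.of ![![-s ^ 2, -s ^ 2, 0, 0, 0, 0, 0], 0, 0, 0, ![0, 0, 0, s, 0, 0, 0]] := by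
  ext i j
  fin_cases i <;> simp [jacobianAt, boehmPoly, pderiv_X, Pi.single_apply] <;> fin_cases j <;> simp

theorem jacobianAt_boehmPoly_single_three (s : K) :
    jacobianAt (boehmPoly s) (Pi.single 3 1) =
      Matrix.of ![![-s ^ 2, -s ^ 2, 0, 0, 0, 0, 0], 0, 0, 0, ![0, 0, s, 0, 0, 0, 0]] := by
  ext i j
  fin_cases i <;> simp [jacobianAt, boehmPoly, pderiv_X, Pi.single_apply] <;> fin_cases j <;> simp

theorem rank_jacobianAt_boehmPoly_single {s : K} (hs : s ≠ 0) {k : Fin 7} (hk : (k : ℕ) < 4) :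
    (jacobianAt (boehmPoly s) (Pi.single k 1)).rank = 2 := by
  obtain rfl | rfl | rfl | rfl : k = 0 ∨ k = 1 ∨ k = 2 ∨ k = 3 := by omega
  · rw [jacobianAt_boehmPoly_single_zero]
    refine Matrix.rank_eq_two_of_rows (r₁ := 0) (r₂ := 1) (by intro i; fin_cases i <;> simp) ?_
    exact linearIndependent_pair_of_triangular (c₁ := 2) (c₂ := 1) (by simpa) (by simp) (by simpa)
  · rw [jacobianAt_boehmPoly_single_one]
    refine Matrix.rank_eq_two_of_rows (r₁ := 0) (r₂ := 1) (by intro i; fin_cases i <;> simp) ?_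
    exact linearIndependent_pair_of_triangular (c₁ := 2) (c₂ := 0) (by simpa) (by simp) (by simpa)
  · rw [jacobianAt_boehmPoly_single_two]
    refine Matrix.rank_eq_two_of_rows (r₁ := 0) (r₂ := 4) (by intro i; fin_cases i <;> simp) ?_
    exact linearIndependent_pair_of_triangular (c₁ := 0) (c₂ := 3) (by simpa) (by simp) (by simpa)
  · rw [jacobianAt_boehmPoly_single_three]
    refine Matrix.rank_eq_two_of_rows (r₁ := 0) (r₂ := 4) (by intro i; fin_cases i <;> simp) ?_
    exact linearIndependent_pair_of_triangular (c₁ := 0) (c₂ := 2) (by simpa) (by simp) (by simpa)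

end Boehm

/-- Let `p₁,…,p₅` be the defining equations of the one-parameter Böhm
subfamily `X_s ⊂ ℙ⁶` (with `s ≠ 0`; variables indexed by `Fin 7`, `xⱼ = X (j−1)`). For each
of the first four standard basis vectors `e_k` of `ℂ⁷`, all `pᵢ` vanish at `e_k` and the
`5×7` Jacobian matrix of the `pᵢ` at `e_k` has rank exactly 2; in particular the coordinate
points `(1:0:0:0:0:0:0)`, `(0:1:0:0:0:0:0)`, `(0:0:1:0:0:0:0)`, `(0:0:0:1:0:0:0)` are
singular points of the threefold `X_s ⊂ ℙ⁶`. -/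
theorem boehm_coordinate_singular_points (s : ℂ) (hs : s ≠ 0)
    (p : Fin 5 → MvPolynomial (Fin 7) ℂ)
    (hp : p = ![
      X 4 * X 6 + C s * X 5 ^ 2 - C (s ^ 2) * ((X 0 + X 1) * (X 2 + X 3)),
      X 2 * X 3 * X 6 + C s * ((X 0 + X 1) * X 0 * X 1) - C (s ^ 2) * (X 4 ^ 2 * X 5),
      X 2 * X 3 * X 5 + C s * X 4 ^ 3 - C (s ^ 2) * ((X 0 + X 1) * X 6 ^ 2),
      X 0 * X 1 * X 5 + C s * X 6 ^ 3 - C (s ^ 2) * ((X 2 + X 3) * X 4 ^ 2),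
      X 0 * X 1 * X 4 + C s * (X 2 * X 3 * (X 2 + X 3)) - C (s ^ 2) * (X 5 * X 6 ^ 2)]) :
    ∀ k : Fin 7, (k : ℕ) < 4 →
      (∀ i : Fin 5, eval (Pi.single k 1 : Fin 7 → ℂ) (p i) = 0) ∧
      (Matrix.of fun (i : Fin 5) (j : Fin 7) =>
          eval (Pi.single k 1 : Fin 7 → ℂ) (pderiv j (p i))).rank = 2 := by
  subst hp
  exact fun k hk => ⟨eval_single_boehmPoly s hk, rank_jacobianAt_boehmPoly_single hs hk⟩
end
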